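/- arXiv:1212.2178 — 5 statements merged into one kernel-verified Lean document; each statement's English description precedes it below -/
import Mathlib

section
/- Let G be a finite undirected graph and let O1 and O2 be two orientations of G such that every vertex has the same indegree in O1 as in O2. Then O1 can be transformed into O2 by a finite sequence of cycle reversals (each cycle reversal reverses every arc of some directed cycle). -/
/-!
The arcs on which `O1` and `O2` disagree form a digraph in which every vertex has equal in- and
outdegree, since the indegrees of `O1` and `O2` agree. A nonempty digraph of this kind contains a
directed cycle. Reversing that cycle in `O1` deletes its arcs from the disagreement digraph and
keeps it balanced, so induction on the number of disagreeing arcs reaches `O2`.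
-/

/-- An orientation of an undirected simple graph `G`: each edge is assigned
exactly one direction, giving the arc relation `arc`. -/
structure GraphOrientation {V : Type*} (G : SimpleGraph V) where
  arc : V → V → Prop
  adj_iff : ∀ u v, G.Adj u v ↔ (arc u v ∨ arc v u)
  asymm : ∀ u v, arc u v → ¬ arc v u

/-- The indegree of a vertex in an orientation. -/
noncomputable def indeg {V : Type*} {G : SimpleGraph V} (D : GraphOrientation G) (v : V) : ℕ :=
  {u | D.arc u v}.ncard

/-- The list of consecutive arcs of a path given as a list of vertices. -/
def pathArcs {V : Type*} (p : List V) : List (V × V) := p.zip p.tail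

/-- The list of arcs of a cycle given as a list of (distinct) vertices,
including the closing arc from the last vertex back to the first. -/
def cycleArcs {V : Type*} (p : List V) : List (V × V) := p.zip (p.rotate 1)

/-- `p` is a (simple) directed path from `u` to `v` with respect to the arc relation `A`. -/
def IsDipath {V : Type*} (A : V → V → Prop) (p : List V) (u v : V) : Prop :=
  p.head? = some u ∧ p.getLast? = some v ∧ p.Nodup ∧ p.Chain' A

/-- `D'` is obtained from `D` by reversing exactly the arcs in the list `A`
(all of which must be arcs of `D`). -/
def ReversalAlong {V : Type*} {G : SimpleGraph V} (D D' : GraphOrientation G)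
    (A : List (V × V)) : Prop :=
  (∀ a ∈ A, D.arc a.1 a.2) ∧ ∀ u v, D'.arc u v ↔ ((D.arc u v ∧ (u, v) ∉ A) ∨ (v, u) ∈ A)

/-- `D'` is obtained from `D` by reversing every arc of some directed cycle. -/
def CycleReversal {V : Type*} {G : SimpleGraph V} (D D' : GraphOrientation G) : Prop :=
  ∃ p : List V, p ≠ [] ∧ p.Nodup ∧ ReversalAlong D D' (cycleArcs p)

/-- `D'` is obtained from `D` by a weak reversal: reversing a directed path
from `u` to `v` where `δ(u) = δ(v) - 1`. -/
def WeakReversal {V : Type*} {G : SimpleGraph V} (D D' : GraphOrientation G) : Prop :=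
  ∃ (p : List V) (u v : V), IsDipath D.arc p u v ∧ indeg D u + 1 = indeg D v ∧
    ReversalAlong D D' (pathArcs p)

/-- `D` contains no reversible path, i.e. no directed path from `u` to `v`
with `δ(u) < δ(v) - 1`. -/
def NoReversiblePath {V : Type*} {G : SimpleGraph V} (D : GraphOrientation G) : Prop :=
  ∀ u v : V, Relation.ReflTransGen D.arc u v → indeg D v ≤ indeg D u + 1

/-- The indegree sequence of an orientation, sorted in decreasing order. -/
noncomputable def degSeq {V : Type*} [Fintype V] {G : SimpleGraph V}
    (D : GraphOrientation G) : List ℕ :=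
  ((Finset.univ.val.map (indeg D)).sort (· ≤ ·)).reverse

/-- Lexicographic (non-strict) comparison of lists of naturals. -/
def lexLE (l₁ l₂ : List ℕ) : Prop := l₁ = l₂ ∨ List.Lex (· < ·) l₁ l₂

/-- `u` two-reaches `v`: there are two arc-disjoint directed paths from `u` to `v`. -/
def TwoReaches {V : Type*} (A : V → V → Prop) (u v : V) : Prop :=
  ∃ p q : List V, IsDipath A p u v ∧ IsDipath A q u v ∧ ∀ a ∈ pathArcs p, a ∉ pathArcs q

/-- Reachability inside the induced subgraph `G[U]`. -/
def ReachIn {V : Type*} (G : SimpleGraph V) (U : Set V) (x y : V) : Prop :=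
  Relation.ReflTransGen (fun a b => a ∈ U ∧ b ∈ U ∧ G.Adj a b) x y

/-- `C` is a connected component of the induced undirected subgraph `G[U]`. -/
def IsCompOf {V : Type*} (G : SimpleGraph V) (U C : Set V) : Prop :=
  ∃ x ∈ U, C = {y | ReachIn G U x y}

theorem Function.exists_mem_periodicPts {α : Type*} [Finite α] [Nonempty α] (f : α → α) :
    ∃ x, x ∈ Function.periodicPts f := by
  obtain ⟨x⟩ := ‹Nonempty α›
  obtain ⟨m, n, heq, hne⟩ : ∃ m n, f^[m] x = f^[n] x ∧ m ≠ n := by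
    simpa [Function.Injective] using not_injective_infinite_finite (f^[·] x)
  wlog hlt : m < n generalizing m n
  · exact this n m heq.symm hne.symm (by omega)
  refine ⟨f^[m] x, Function.mk_mem_periodicPts (n := n - m) (by omega) ?_⟩
  rw [Function.IsPeriodicPt, Function.IsFixedPt, ← Function.iterate_add_apply,
    Nat.sub_add_cancel hlt.le, heq]

theorem List.ncard_setOf_mem_of_nodup_map_snd {α β : Type*} [DecidableEq β] {L : List (α × β)}
    (hL : (L.map Prod.snd).Nodup) (b : β) :
    {a | (a, b) ∈ L}.ncard = if b ∈ L.map Prod.snd then 1 else 0 := by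
  split_ifs with hb
  · obtain ⟨x, hx, rfl⟩ := List.mem_map.mp hb
    refine Set.ncard_eq_one.mpr ⟨x.1, Set.ext fun a => ⟨fun ha => ?_, fun ha => ?_⟩⟩
    · exact congrArg Prod.fst (List.inj_on_of_nodup_map hL ha hx rfl)
    · rw [Set.mem_singleton_iff.mp ha]
      exact hx
  · have hempty : {a | (a, b) ∈ L} = ∅ :=
      Set.eq_empty_of_forall_notMem fun a ha => hb (List.mem_map.mpr ⟨(a, b), ha, rfl⟩)
    rw [hempty, Set.ncard_empty]

theorem List.ncard_setOf_mem_of_nodup_map_fst {α β : Type*} [DecidableEq α] {L : List (α × β)}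
    (hL : (L.map Prod.fst).Nodup) (a : α) :
    {b | (a, b) ∈ L}.ncard = if a ∈ L.map Prod.fst then 1 else 0 := by
  have hswap : (L.map Prod.swap).map Prod.snd = L.map Prod.fst := by simp
  have h := List.ncard_setOf_mem_of_nodup_map_snd (hswap ▸ hL) a
  simpa only [hswap, List.mem_map, Prod.swap_eq_iff_eq_swap, Prod.swap_prod_mk,
    exists_eq_right] using h

section Balanced

variable {V : Type*}

theorem mem_cycleArcs_iff {p : List V} {a b : V} :
    (a, b) ∈ cycleArcs p ↔ ∃ (i : ℕ) (hi : i < p.length),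
      p[i] = a ∧ p[(i + 1) % p.length]'(Nat.mod_lt _ (by omega)) = b := by
  simp only [cycleArcs, List.mem_iff_getElem, List.getElem_zip, List.getElem_rotate,
    Prod.mk.injEq, List.length_zip, List.length_rotate, Nat.min_self]

theorem cycleArcs_ne_nil {p : List V} (hp : p ≠ []) : cycleArcs p ≠ [] := by
  rw [← List.length_pos_iff] at hp ⊢
  simpa [cycleArcs] using hp

def IsBalanced (R : V → V → Prop) : Prop :=
  ∀ v, {u | R u v}.ncard = {w | R v w}.ncard

theorem isBalanced_cycleArcs {p : List V} (hp : p.Nodup) :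
    IsBalanced fun u v => (u, v) ∈ cycleArcs p := by
  have hlen : (p.rotate 1).length = p.length := List.length_rotate ..
  have hfst : (cycleArcs p).map Prod.fst = p := List.map_fst_zip hlen.ge
  have hsnd : (cycleArcs p).map Prod.snd = p.rotate 1 := List.map_snd_zip hlen.le
  classical
  intro v
  rw [List.ncard_setOf_mem_of_nodup_map_snd (by rwa [hsnd, List.nodup_rotate]),
    List.ncard_setOf_mem_of_nodup_map_fst (by rwa [hfst]), hfst, hsnd]
  simp only [List.mem_rotate]

theorem IsBalanced.sdiff [Finite V] {R C : V → V → Prop} (hR : IsBalanced R)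
    (hC : IsBalanced C) (hCR : ∀ u v, C u v → R u v) :
    IsBalanced fun u v => R u v ∧ ¬ C u v := by
  intro v
  have hin := Set.ncard_sdiff (s := {u | C u v}) (t := {u | R u v}) (fun u => hCR u v)
  have hout := Set.ncard_sdiff (s := {w | C v w}) (t := {w | R v w}) (fun w => hCR v w)
  exact hin.trans (hR v ▸ hC v ▸ hout).symm

theorem IsBalanced.exists_rel [Finite V] {R : V → V → Prop} (hR : IsBalanced R) {u v : V}
    (huv : R u v) : ∃ w, R v w := by
  have hpos : 0 < {w | R v w}.ncard := hR v ▸ (Set.ncard_pos (Set.toFinite _)).mpr ⟨u, huv⟩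
  exact (Set.ncard_pos (Set.toFinite _)).mp hpos

open Function in
/-- Choosing an out-arc at every vertex that has an in-arc gives a self-map of these vertices;
any periodic orbit of it is the cycle. -/
theorem exists_cycleArcs_of_forall_exists_rel [Finite V] {R : V → V → Prop}
    (hR : ∀ u v, R u v → ∃ w, R v w) {u v : V} (huv : R u v) :
    ∃ p : List V, p ≠ [] ∧ p.Nodup ∧ ∀ a ∈ cycleArcs p, R a.1 a.2 := by
  let W := {v // ∃ u, R u v}
  choose next hnext using fun w : W => hR _ w.1 w.2.choose_spec
  let f : W → W := fun w => ⟨next w, w, hnext w⟩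
  have : Nonempty W := ⟨⟨v, u, huv⟩⟩
  obtain ⟨x, hx⟩ := exists_mem_periodicPts f
  refine ⟨(List.range (minimalPeriod f x)).map fun n => (f^[n] x : V), ?_, ?_, ?_⟩
  · simpa using (minimalPeriod_pos_of_mem_periodicPts hx).ne'
  · refine List.Nodup.map_on (fun i hi j hj hij => ?_) List.nodup_range
    exact iterate_injOn_Iio_minimalPeriod (List.mem_range.mp hi) (List.mem_range.mp hj)
      (Subtype.ext hij)
  · rintro ⟨a, b⟩ hab
    obtain ⟨i, hi, rfl, rfl⟩ := mem_cycleArcs_iff.mp hab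
    simp only [List.length_map, List.length_range, List.getElem_map, List.getElem_range,
      iterate_mod_minimalPeriod_eq, iterate_succ_apply']
    exact hnext _

end Balanced

namespace GraphOrientation

variable {V : Type*} {G : SimpleGraph V}

theorem ext_arc {D E : GraphOrientation G} (h : D.arc = E.arc) : D = E := by
  cases D; cases E; simp_all

def Disagree (D E : GraphOrientation G) (u v : V) : Prop := D.arc u v ∧ E.arc v u

theorem arc_iff_not_disagree (D E : GraphOrientation G) {u v : V} (huv : D.arc u v) :
    E.arc u v ↔ ¬ D.Disagree E u v := by
  have hE := (E.adj_iff u v).mp ((D.adj_iff u v).mpr (Or.inl huv))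
  have := E.asymm u v
  unfold Disagree
  tauto

theorem eq_of_forall_not_disagree {D E : GraphOrientation G}
    (h : ∀ u v, ¬ D.Disagree E u v) : D = E := by
  refine ext_arc (funext₂ fun u v => propext ⟨fun huv => ?_, fun huv => ?_⟩)
  · exact (D.arc_iff_not_disagree E huv).mpr (h u v)
  · exact (E.arc_iff_not_disagree D huv).mpr fun hvu => h v u ⟨hvu.2, hvu.1⟩

def reverseArcs (D : GraphOrientation G) (C : List (V × V)) (hC : ∀ a ∈ C, D.arc a.1 a.2) :
    GraphOrientation G where
  arc u v := (D.arc u v ∧ (u, v) ∉ C) ∨ (v, u) ∈ C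
  adj_iff u v := by
    have := hC (u, v)
    have := hC (v, u)
    rw [D.adj_iff u v]
    tauto
  asymm u v := by
    have := D.asymm u v
    have := D.asymm v u
    have := hC (u, v)
    have := hC (v, u)
    tauto

theorem reversalAlong_reverseArcs (D : GraphOrientation G) (C : List (V × V))
    (hC : ∀ a ∈ C, D.arc a.1 a.2) : ReversalAlong D (D.reverseArcs C hC) C :=
  ⟨hC, fun _ _ => Iff.rfl⟩

theorem disagree_reverseArcs {D E : GraphOrientation G} {C : List (V × V)}
    (hC : ∀ a ∈ C, D.Disagree E a.1 a.2) (u v : V) :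
    (D.reverseArcs C fun a ha => (hC a ha).1).Disagree E u v ↔
      D.Disagree E u v ∧ (u, v) ∉ C := by
  have := E.asymm u v
  have := hC (v, u)
  simp only [Disagree, reverseArcs] at *
  tauto

theorem indeg_eq_ncard_add [Finite V] (D E : GraphOrientation G) (v : V) :
    indeg D v = {u | D.arc u v ∧ E.arc u v}.ncard + {u | D.Disagree E u v}.ncard := by
  have hdiff : {u | D.Disagree E u v} = {u | D.arc u v} \ {u | E.arc u v} := by
    ext u
    exact ⟨fun h => ⟨h.1, (D.arc_iff_not_disagree E h.1).not_left.mpr h⟩,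
      fun h => (D.arc_iff_not_disagree E h.1).not_left.mp h.2⟩
  rw [hdiff, indeg, ← Set.ncard_inter_add_ncard_sdiff_eq_ncard {u | D.arc u v} {u | E.arc u v}]
  rfl

theorem isBalanced_disagree_of_indeg_eq [Finite V] {D E : GraphOrientation G}
    (h : ∀ v, indeg D v = indeg E v) : IsBalanced (D.Disagree E) := by
  intro v
  have hcommon : {u | E.arc u v ∧ D.arc u v} = {u | D.arc u v ∧ E.arc u v} := by
    simp only [and_comm]
  have hflip : {u | E.Disagree D u v} = {w | D.Disagree E v w} := by
    simp only [Disagree, and_comm]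
  have hE := E.indeg_eq_ncard_add D v
  rw [hcommon, hflip, ← h v, D.indeg_eq_ncard_add E v] at hE
  omega

theorem reflTransGen_cycleReversal_of_isBalanced [Finite V] {D E : GraphOrientation G}
    (hDE : IsBalanced (D.Disagree E)) : Relation.ReflTransGen CycleReversal D E := by
  induction hn : {x : V × V | D.Disagree E x.1 x.2}.ncard using Nat.strong_induction_on
    generalizing D with
  | _ n ih =>
  by_cases hne : ∃ u v, D.Disagree E u v
  swap
  · simp only [not_exists] at hne
    rw [eq_of_forall_not_disagree hne]
  obtain ⟨u, v, huv⟩ := hne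
  obtain ⟨p, hp, hpnd, hpD⟩ := exists_cycleArcs_of_forall_exists_rel (fun _ _ => hDE.exists_rel) huv
  have hD'_iff := disagree_reverseArcs hpD
  set D' := D.reverseArcs (cycleArcs p) fun a ha => (hpD a ha).1
  have hbal : IsBalanced (D'.Disagree E) := by
    have hD' : D'.Disagree E = fun u v => D.Disagree E u v ∧ (u, v) ∉ cycleArcs p :=
      funext₂ fun u v => propext (hD'_iff u v)
    exact hD' ▸ hDE.sdiff (isBalanced_cycleArcs hpnd) fun u v huv => hpD (u, v) huv
  obtain ⟨c, hc⟩ := List.exists_mem_of_ne_nil _ (cycleArcs_ne_nil hp)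
  have hlt : {x : V × V | D'.Disagree E x.1 x.2}.ncard < n := by
    refine hn ▸ Set.ncard_lt_ncard ⟨fun x hx => ((hD'_iff x.1 x.2).mp hx).1, fun hsub => ?_⟩
    exact ((hD'_iff c.1 c.2).mp (hsub (hpD c hc))).2 hc
  exact .head ⟨p, hp, hpnd, reversalAlong_reverseArcs _ _ _⟩ (ih _ hlt hbal rfl)

end GraphOrientation

/-- If two orientations of a finite graph have the same indegree at every vertex,
then one can be transformed into the other by a finite sequence of cycle reversals. -/
theorem stmt_0 {V : Type*} [Fintype V] (G : SimpleGraph V)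
    (O1 O2 : GraphOrientation G) (h : ∀ v : V, indeg O1 v = indeg O2 v) :
    Relation.ReflTransGen (fun D D' : GraphOrientation G => CycleReversal D D') O1 O2 :=
  GraphOrientation.reflTransGen_cycleReversal_of_isBalanced
    (GraphOrientation.isBalanced_disagree_of_indeg_eq h)
end

section
/- Let G be a finite undirected graph, let D_lex be an orientation of G that minimizes the lexicographic order of the indegree sequence among all orientations of G, and let D be an orientation of G containing no reversible path. Then D_lex can be transformed into D by a finite sequence of weak reversals and cycle reversals. -/
/-!
A lex-minimal orientation has no reversible path: reversing one would lower its indegree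
sequence. Now let `D₁` be lex-minimal, let `D₂` have no reversible path, and consider the arcs
of `D₁` that are reversed in `D₂`. If they contain a directed cycle, reversing it keeps every
indegree. Otherwise a longest directed path `u ⤳ v` of such arcs has no such arc entering `u`
and none leaving `v`, whence `δ₁ u < δ₂ u` and `δ₂ v < δ₁ v`; together with `δ₁ v ≤ δ₁ u + 1`
and `δ₂ u ≤ δ₂ v + 1` this forces `δ₁ v = δ₁ u + 1`, so reversing the path is a weak reversal,
and it only swaps the indegrees of `u` and `v`. In both cases the indegree sequence, hence
lex-minimality, is preserved while the number of disagreeing arcs drops.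
-/

section ArcLists

open scoped Classical

variable {V : Type*} {R : V → V → Prop}

lemma pathArcs_eq_zip_dropLast (p : List V) : pathArcs p = p.dropLast.zip p.tail := by
  match p with
  | [] => rfl
  | [_] => rfl
  | a :: b :: t =>
    change (a, b) :: pathArcs (b :: t) = (a, b) :: (b :: t).dropLast.zip t
    rw [pathArcs_eq_zip_dropLast (b :: t)]
    rfl

lemma map_fst_pathArcs (p : List V) : (pathArcs p).map Prod.fst = p.dropLast := by
  rw [pathArcs_eq_zip_dropLast, List.map_fst_zip (by simp)]

lemma map_snd_pathArcs (p : List V) : (pathArcs p).map Prod.snd = p.tail :=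
  List.map_snd_zip (by simp)

lemma map_fst_cycleArcs (c : List V) : (cycleArcs c).map Prod.fst = c :=
  List.map_fst_zip (by simp)

lemma map_snd_cycleArcs (c : List V) : (cycleArcs c).map Prod.snd = c.rotate 1 :=
  List.map_snd_zip (by simp)

lemma cycleArcs_eq_pathArcs_append {c : List V} {x : V} (hc : c.head? = some x) :
    cycleArcs c = pathArcs (c ++ [x]) := by
  obtain ⟨t, rfl⟩ := List.head?_eq_some_iff.1 hc
  change (x :: t).zip ((x :: t).rotate 1) = ((x :: t) ++ [x]).zip (t ++ [x])
  rw [List.rotate_cons_succ, List.rotate_zero, ← List.append_nil (t ++ [x]),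
    List.zip_append (by simp)]
  simp

lemma rel_of_mem_pathArcs : ∀ {p : List V}, p.IsChain R → ∀ e ∈ pathArcs p, R e.1 e.2
  | [], _ => by simp [pathArcs]
  | [_], _ => by simp [pathArcs]
  | a :: b :: t, h => by
    rw [List.isChain_cons_cons] at h
    change ∀ e ∈ (a, b) :: pathArcs (b :: t), R e.1 e.2
    exact List.forall_mem_cons.2 ⟨h.1, rel_of_mem_pathArcs h.2⟩

lemma ncard_setOf_mem_left {A : List (V × V)} (hA : (A.map Prod.snd).Nodup) (w : V) :
    {x | (x, w) ∈ A}.ncard = if w ∈ A.map Prod.snd then 1 else 0 := by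
  split_ifs with hw
  · obtain ⟨⟨x, w⟩, hx, rfl⟩ := List.mem_map.1 hw
    refine Set.ncard_eq_one.2 ⟨x, Set.eq_singleton_iff_unique_mem.2 ⟨hx, fun y hy => ?_⟩⟩
    exact congrArg Prod.fst (List.inj_on_of_nodup_map hA hy hx rfl)
  · convert Set.ncard_empty V
    exact Set.eq_empty_of_forall_notMem fun x hx => hw (List.mem_map_of_mem (f := Prod.snd) hx)

lemma ncard_setOf_mem_right {A : List (V × V)} (hA : (A.map Prod.fst).Nodup) (w : V) :
    {x | (w, x) ∈ A}.ncard = if w ∈ A.map Prod.fst then 1 else 0 := by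
  have hswap : (A.map Prod.swap).map Prod.snd = A.map Prod.fst := by simp [Function.comp_def]
  have h := ncard_setOf_mem_left (A := A.map Prod.swap) (hswap ▸ hA) w
  simpa only [hswap, List.mem_map_swap] using h

end ArcLists

section Dipaths

variable {V : Type*} {R : V → V → Prop} {p : List V} {u v w : V}

lemma IsDipath.ne_nil (hp : IsDipath R p u v) : p ≠ [] := by
  rintro rfl; simp [IsDipath] at hp

lemma IsDipath.head_mem (hp : IsDipath R p u v) : u ∈ p := List.mem_of_mem_head? hp.1

lemma IsDipath.last_mem (hp : IsDipath R p u v) : v ∈ p := List.mem_of_mem_getLast? hp.2.1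

lemma IsDipath.mono {S : V → V → Prop} (hRS : ∀ a b, R a b → S a b) (hp : IsDipath R p u v) :
    IsDipath S p u v :=
  ⟨hp.1, hp.2.1, hp.2.2.1, hp.2.2.2.imp hRS⟩

lemma IsDipath.reverse (hp : IsDipath R p u v) : IsDipath (fun a b => R b a) p.reverse v u :=
  ⟨by simpa using hp.2.1, by simpa using hp.1, List.nodup_reverse.2 hp.2.2.1,
    List.isChain_reverse.2 hp.2.2.2⟩

lemma IsDipath.reflTransGen (hp : IsDipath R p u v) : Relation.ReflTransGen R u v := by
  have h := List.relationReflTransGen_of_exists_isChain p hp.2.2.2 hp.ne_nil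
  rwa [(List.head_eq_iff_head?_eq_some _).2 hp.1,
    (List.getLast_eq_iff_getLast?_eq_some _).2 hp.2.1] at h

lemma IsDipath.concat (hp : IsDipath R p u v) (hvw : R v w) (hw : w ∉ p) :
    IsDipath R (p ++ [w]) u w := by
  refine ⟨by rw [List.head?_append_of_ne_nil _ hp.ne_nil, hp.1], by simp, ?_, ?_⟩
  · refine List.nodup_append.2 ⟨hp.2.2.1, List.nodup_singleton w, fun a ha b hb => ?_⟩
    rw [List.mem_singleton.1 hb]
    exact fun h => hw (h ▸ ha)
  · refine List.isChain_append.2 ⟨hp.2.2.2, List.isChain_singleton w, ?_⟩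
    simp only [hp.2.1, List.head?_cons, Option.mem_def, Option.some.injEq]
    rintro _ rfl _ rfl
    exact hvw

lemma IsDipath.mem_tail_iff (hp : IsDipath R p u v) : w ∈ p.tail ↔ w ∈ p ∧ w ≠ u := by
  obtain ⟨t, rfl⟩ := List.head?_eq_some_iff.1 hp.1
  have hu : u ∉ t := (List.nodup_cons.1 hp.2.2.1).1
  simp only [List.tail_cons, List.mem_cons]
  exact ⟨fun h => ⟨Or.inr h, by rintro rfl; exact hu h⟩, fun h => h.1.resolve_left h.2⟩

lemma IsDipath.mem_dropLast_iff (hp : IsDipath R p u v) : w ∈ p.dropLast ↔ w ∈ p ∧ w ≠ v := by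
  have h := hp.reverse.mem_tail_iff (w := w)
  rwa [List.tail_reverse, List.mem_reverse, List.mem_reverse] at h

lemma IsDipath.ne_of_two_le_length (hp : IsDipath R p u v) (hlen : 2 ≤ p.length) : u ≠ v := by
  rintro rfl
  obtain ⟨t, rfl⟩ := List.head?_eq_some_iff.1 hp.1
  have ht : t ≠ [] := by rintro rfl; simp at hlen
  have hlast := hp.2.1
  rw [List.getLast?_cons, List.getLast?_eq_some_getLast ht, Option.getD_some,
    Option.some.injEq] at hlast
  exact (List.nodup_cons.1 hp.2.2.1).1 (hlast ▸ List.getLast_mem ht)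

lemma exists_isDipath_of_reflTransGen (h : Relation.ReflTransGen R u v) :
    ∃ p, IsDipath R p u v := by
  induction h with
  | refl => exact ⟨[u], rfl, rfl, List.nodup_singleton u, List.isChain_singleton u⟩
  | @tail b c _ hbc ih =>
    obtain ⟨p, hp⟩ := ih
    by_cases hcp : c ∈ p
    · obtain ⟨s, t, rfl⟩ := List.append_of_mem hcp
      refine ⟨s ++ [c], ?_, by simp, hp.2.2.1.sublist (by simp), hp.2.2.2.prefix ⟨t, by simp⟩⟩
      cases s <;> simpa using hp.1
    · exact ⟨p ++ [c], hp.concat hbc hcp⟩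

lemma IsDipath.rel_of_mem_cycleArcs {c : List V} {x y : V} (hc : IsDipath R c x y) (hyx : R y x) :
    ∀ e ∈ cycleArcs c, R e.1 e.2 := by
  rw [cycleArcs_eq_pathArcs_append hc.1]
  refine rel_of_mem_pathArcs (List.isChain_append.2 ⟨hc.2.2.2, List.isChain_singleton x, ?_⟩)
  simp only [hc.2.1, List.head?_cons, Option.mem_def, Option.some.injEq]
  rintro _ rfl _ rfl
  exact hyx

lemma IsDipath.exists_mem_pathArcs_head (hp : IsDipath R p u v) (huv : u ≠ v) :
    ∃ b, (u, b) ∈ pathArcs p := by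
  have hu : u ∈ (pathArcs p).map Prod.fst := by
    rw [map_fst_pathArcs]; exact hp.mem_dropLast_iff.2 ⟨hp.head_mem, huv⟩
  obtain ⟨⟨_, b⟩, he, rfl⟩ := List.mem_map.1 hu
  exact ⟨b, he⟩

lemma IsDipath.exists_mem_pathArcs_last (hp : IsDipath R p u v) (huv : u ≠ v) :
    ∃ a, (a, v) ∈ pathArcs p := by
  have hv : v ∈ (pathArcs p).map Prod.snd := by
    rw [map_snd_pathArcs]; exact hp.mem_tail_iff.2 ⟨hp.last_mem, huv.symm⟩
  obtain ⟨⟨a, _⟩, he, rfl⟩ := List.mem_map.1 hv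
  exact ⟨a, he⟩

end Dipaths

namespace GraphOrientation

variable {V : Type*} {G : SimpleGraph V}

lemma ext {D D' : GraphOrientation G} (h : ∀ u v, D.arc u v ↔ D'.arc u v) : D = D' := by
  cases D; cases D'
  congr
  funext u v
  exact propext (h u v)

def reverse (D : GraphOrientation G) (A : List (V × V)) (hA : ∀ a ∈ A, D.arc a.1 a.2) :
    GraphOrientation G where
  arc u v := (D.arc u v ∧ (u, v) ∉ A) ∨ (v, u) ∈ A
  adj_iff u v := by
    rw [D.adj_iff u v]
    constructor
    · rintro (h | h)
      · by_cases hm : (u, v) ∈ A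
        exacts [Or.inr (Or.inr hm), Or.inl (Or.inl ⟨h, hm⟩)]
      · by_cases hm : (v, u) ∈ A
        exacts [Or.inl (Or.inr hm), Or.inr (Or.inl ⟨h, hm⟩)]
    · rintro ((⟨h, -⟩ | h) | (⟨h, -⟩ | h))
      exacts [Or.inl h, Or.inr (hA _ h), Or.inr h, Or.inl (hA _ h)]
  asymm u v := by
    rintro (⟨h₁, h₂⟩ | h) (⟨h₃, h₄⟩ | h')
    exacts [D.asymm u v h₁ h₃, h₂ h', h₄ h, D.asymm v u (hA _ h) (hA _ h')]

lemma reversalAlong_reverse (D : GraphOrientation G) (A : List (V × V))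
    (hA : ∀ a ∈ A, D.arc a.1 a.2) : ReversalAlong D (D.reverse A hA) A :=
  ⟨hA, fun _ _ => Iff.rfl⟩

lemma indeg_reverse_add [Finite V] (D : GraphOrientation G) (A : List (V × V))
    (hA : ∀ a ∈ A, D.arc a.1 a.2) (w : V) :
    indeg (D.reverse A hA) w + {x | (x, w) ∈ A}.ncard = indeg D w + {x | (w, x) ∈ A}.ncard := by
  have hsub : {x | (x, w) ∈ A} ⊆ {x | D.arc x w} := fun x hx => hA _ hx
  have hdisj : Disjoint ({x | D.arc x w} \ {x | (x, w) ∈ A}) {x | (w, x) ∈ A} :=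
    Set.disjoint_left.2 fun x hx hx' => D.asymm w x (hA _ hx') hx.1
  have hsplit : {x | (D.reverse A hA).arc x w} =
      ({x | D.arc x w} \ {x | (x, w) ∈ A}) ∪ {x | (w, x) ∈ A} := rfl
  have hle := Set.ncard_le_ncard hsub
  rw [indeg, hsplit, Set.ncard_union_eq hdisj, Set.ncard_sdiff hsub, indeg]
  omega

open scoped Classical in
lemma indeg_reverse_pathArcs [Finite V] (D : GraphOrientation G) {p : List V} {u v : V}
    (hp : IsDipath D.arc p u v) (hA : ∀ a ∈ pathArcs p, D.arc a.1 a.2) (w : V) :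
    indeg (D.reverse (pathArcs p) hA) w + (if w = v then 1 else 0) =
      indeg D w + (if w = u then 1 else 0) := by
  have h := D.indeg_reverse_add (pathArcs p) hA w
  have hsnd : ((pathArcs p).map Prod.snd).Nodup := by
    rw [map_snd_pathArcs]; exact hp.2.2.1.sublist (List.tail_sublist p)
  have hfst : ((pathArcs p).map Prod.fst).Nodup := by
    rw [map_fst_pathArcs]; exact hp.2.2.1.sublist (List.dropLast_sublist p)
  rw [ncard_setOf_mem_left hsnd, ncard_setOf_mem_right hfst, map_snd_pathArcs,
    map_fst_pathArcs] at h
  simp only [hp.mem_tail_iff, hp.mem_dropLast_iff] at h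
  have hu := hp.head_mem
  have hv := hp.last_mem
  by_cases hwp : w ∈ p
  · split_ifs at h ⊢ <;> simp_all
  · have hwu : w ≠ u := fun h => hwp (h ▸ hu)
    have hwv : w ≠ v := fun h => hwp (h ▸ hv)
    simp_all

lemma indeg_reverse_cycleArcs [Finite V] (D : GraphOrientation G) {c : List V} (hc : c.Nodup)
    (hA : ∀ a ∈ cycleArcs c, D.arc a.1 a.2) (w : V) :
    indeg (D.reverse (cycleArcs c) hA) w = indeg D w := by
  classical
  have h := D.indeg_reverse_add (cycleArcs c) hA w
  rw [ncard_setOf_mem_left (by simpa only [map_snd_cycleArcs] using List.nodup_rotate.2 hc),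
    ncard_setOf_mem_right (by simpa only [map_fst_cycleArcs] using hc),
    map_snd_cycleArcs, map_fst_cycleArcs] at h
  simp only [List.mem_rotate] at h
  omega

end GraphOrientation

section DegSeq

lemma Multiset.reverse_sort_le (M : Multiset ℕ) : (M.sort (· ≤ ·)).reverse = M.sort (· ≥ ·) := by
  refine List.Perm.eq_of_pairwise' (List.pairwise_reverse.2 (Multiset.pairwise_sort M _))
    (Multiset.pairwise_sort M _) ?_
  rw [← Multiset.coe_eq_coe, Multiset.coe_reverse, Multiset.sort_eq, Multiset.sort_eq]

lemma Multiset.sort_ge_lex_lt {a b : ℕ} (hab : a < b) (N : Multiset ℕ) :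
    List.Lex (· < ·) (((a + 1) ::ₘ b ::ₘ N).sort (· ≥ ·)) ((a ::ₘ (b + 1) ::ₘ N).sort (· ≥ ·)) := by
  induction N using Multiset.strongInductionOn with
  | ih N ih =>
  by_cases hbig : ∃ m ∈ N, b < m
  · obtain ⟨m₀, hm₀, hbm₀⟩ := hbig
    obtain ⟨m, hm, hmax⟩ := Multiset.exists_max_image id (s := N) (by rintro rfl; simp at hm₀)
    have hbm : b < m := hbm₀.trans_le (hmax _ hm₀)
    have hsort : ∀ x y, x ≤ m → y ≤ m → (x ::ₘ y ::ₘ N).sort (· ≥ ·) =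
        m :: (x ::ₘ y ::ₘ N.erase m).sort (· ≥ ·) := by
      intro x y hx hy
      conv_lhs => rw [← Multiset.cons_erase hm, Multiset.cons_swap y, Multiset.cons_swap x]
      refine Multiset.sort_cons _ _ _ fun z hz => ?_
      simp only [Multiset.mem_cons] at hz
      rcases hz with rfl | rfl | hz
      exacts [hx, hy, hmax z (Multiset.mem_of_mem_erase hz)]
    rw [hsort _ _ (by omega) (by omega), hsort _ _ (by omega) (by omega)]
    exact List.Lex.cons (ih _ (Multiset.erase_lt.2 hm))
  · push Not at hbig
    have hsort : (a ::ₘ (b + 1) ::ₘ N).sort (· ≥ ·) = (b + 1) :: (a ::ₘ N).sort (· ≥ ·) := by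
      rw [Multiset.cons_swap a]
      refine Multiset.sort_cons _ _ _ fun z hz => ?_
      simp only [Multiset.mem_cons] at hz
      rcases hz with rfl | hz
      exacts [by omega, (hbig z hz).trans (Nat.le_succ b)]
    obtain ⟨x, l, hxl⟩ := List.exists_cons_of_ne_nil
        (l := ((a + 1) ::ₘ b ::ₘ N).sort (· ≥ ·)) (by simp [← List.length_pos_iff])
    have hx : x ∈ (a + 1) ::ₘ b ::ₘ N := (Multiset.mem_sort _).1 (hxl ▸ List.mem_cons_self)
    rw [hxl, hsort]
    refine List.Lex.rel ?_
    simp only [Multiset.mem_cons] at hx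
    rcases hx with rfl | rfl | hx
    exacts [by omega, by omega, Nat.lt_succ_of_le (hbig x hx)]

variable {V : Type*} [Fintype V] {G : SimpleGraph V}

lemma degSeq_eq_sort (D : GraphOrientation G) :
    degSeq D = (Finset.univ.val.map (indeg D)).sort (· ≥ ·) :=
  Multiset.reverse_sort_le _

lemma degSeq_eq_of_indeg_eq_comp {D D' : GraphOrientation G} (σ : Equiv.Perm V)
    (h : ∀ w, indeg D' w = indeg D (σ w)) : degSeq D' = degSeq D := by
  rw [degSeq_eq_sort, degSeq_eq_sort, funext h, ← Function.comp_def, ← Multiset.map_map,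
    Multiset.map_univ_val_equiv]

lemma exists_univ_val_eq_cons_cons {u v : V} (huv : u ≠ v) :
    ∃ N : Multiset V, Finset.univ.val = u ::ₘ v ::ₘ N ∧ u ∉ N ∧ v ∉ N := by
  classical
  have hnd : (Finset.univ.val : Multiset V).Nodup := Finset.univ.nodup
  refine ⟨(Finset.univ.val.erase u).erase v, ?_, fun h => hnd.notMem_erase
    (Multiset.mem_of_mem_erase h), (hnd.erase u).notMem_erase⟩
  rw [Multiset.cons_erase (Multiset.mem_erase_of_ne huv.symm |>.2 (Finset.mem_univ v)),
    Multiset.cons_erase (Finset.mem_univ u)]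

open scoped Classical in
lemma degSeq_lex_lt {D D' : GraphOrientation G} {u v : V} (huv : u ≠ v)
    (hlt : indeg D u + 1 < indeg D v)
    (h : ∀ w, indeg D' w + (if w = v then 1 else 0) = indeg D w + (if w = u then 1 else 0)) :
    List.Lex (· < ·) (degSeq D') (degSeq D) := by
  obtain ⟨N, hN, huN, hvN⟩ := exists_univ_val_eq_cons_cons huv
  have hu := h u
  have hv := h v
  have hrest : N.map (indeg D') = N.map (indeg D) := Multiset.map_congr rfl fun w hw => by
    simpa [show w ≠ u by rintro rfl; exact huN hw, show w ≠ v by rintro rfl; exact hvN hw]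
      using h w
  simp only [huv, huv.symm, if_true, if_false, add_zero] at hu hv
  rw [degSeq_eq_sort, degSeq_eq_sort, hN, Multiset.map_cons, Multiset.map_cons,
    Multiset.map_cons, Multiset.map_cons, hrest, hu, ← hv]
  exact Multiset.sort_ge_lex_lt (by omega) _

end DegSeq

lemma noReversiblePath_of_lexMin {V : Type*} [Fintype V] {G : SimpleGraph V}
    {D : GraphOrientation G} (hD : ∀ D' : GraphOrientation G, lexLE (degSeq D) (degSeq D')) :
    NoReversiblePath D := by
  intro u v huv
  by_contra! hlt
  obtain ⟨p, hp⟩ := exists_isDipath_of_reflTransGen huv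
  have hne : u ≠ v := by rintro rfl; omega
  have hA := rel_of_mem_pathArcs hp.2.2.2
  have hlex := degSeq_lex_lt hne hlt (D.indeg_reverse_pathArcs hp hA)
  rcases hD (D.reverse (pathArcs p) hA) with h | h
  · exact Std.Irrefl.irrefl _ (h ▸ hlex)
  · exact Std.Asymm.asymm _ _ hlex h

section MaximalPaths

variable {V : Type*} {R : V → V → Prop}

def HasDicycle (R : V → V → Prop) : Prop :=
  ∃ (c : List V) (x y : V), IsDipath R c x y ∧ R y x

lemma HasDicycle.of_swap (h : HasDicycle fun a b => R b a) : HasDicycle R := by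
  obtain ⟨c, x, y, hc, hyx⟩ := h
  exact ⟨c.reverse, y, x, hc.reverse, hyx⟩

lemma hasDicycle_or_forall_not_rel_of_maximal {p : List V} {u v : V} (hp : IsDipath R p u v)
    (hmax : ∀ q : List V, q.Nodup → q.IsChain R → q.length ≤ p.length) :
    HasDicycle R ∨ ∀ y, ¬ R v y := by
  refine or_iff_not_imp_right.2 fun h => ?_
  push Not at h
  obtain ⟨y, hy⟩ := h
  by_cases hyp : y ∈ p
  · obtain ⟨s, t, rfl⟩ := List.append_of_mem hyp
    refine ⟨y :: t, y, v, ⟨rfl, ?_, hp.2.2.1.sublist (List.sublist_append_right s _),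
      hp.2.2.2.suffix (List.suffix_append s _)⟩, hy⟩
    rw [← List.getLast?_append_of_ne_nil s (List.cons_ne_nil y t)]
    exact hp.2.1
  · have hq := hp.concat hy hyp
    have := hmax _ hq.2.2.1 hq.2.2.2
    simp at this

lemma hasDicycle_or_exists_maximal_path [Finite V] {a b : V} (hab : R a b) (hne : a ≠ b) :
    HasDicycle R ∨
      ∃ (p : List V) (u v : V), IsDipath R p u v ∧ u ≠ v ∧ (∀ x, ¬ R x u) ∧ ∀ y, ¬ R v y := by
  have hfin : {q : List V | q.Nodup ∧ q.IsChain R}.Finite :=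
    (List.finite_length_le V (Nat.card V)).subset fun q hq => by
      have := Fintype.ofFinite V
      simpa [Nat.card_eq_fintype_card] using hq.1.length_le_card
  obtain ⟨p, ⟨hnd, hch⟩, hmax⟩ := Set.exists_max_image _ List.length hfin
    ⟨[a, b], by simp [hne], List.isChain_pair.2 hab⟩
  have hlen : 2 ≤ p.length := hmax [a, b] ⟨by simp [hne], List.isChain_pair.2 hab⟩
  have hpne : p ≠ [] := List.ne_nil_of_length_pos (by omega)
  have hp : IsDipath R p (p.head hpne) (p.getLast hpne) :=
    ⟨List.head?_eq_some_head hpne, List.getLast?_eq_some_getLast hpne, hnd, hch⟩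
  rcases hasDicycle_or_forall_not_rel_of_maximal hp (fun q hq hq' => hmax q ⟨hq, hq'⟩)
    with hcyc | hout
  · exact Or.inl hcyc
  rcases hasDicycle_or_forall_not_rel_of_maximal hp.reverse (fun q hq hq' => by
      simpa using hmax q.reverse ⟨List.nodup_reverse.2 hq, List.isChain_reverse.2 hq'⟩)
    with hcyc | hin
  · exact Or.inl hcyc.of_swap
  exact Or.inr ⟨p, _, _, hp, hp.ne_of_two_le_length hlen, hin, hout⟩

end MaximalPaths

section Disagreement

variable {V : Type*} {G : SimpleGraph V} {D₁ D₂ : GraphOrientation G}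

def Disagree (D₁ D₂ : GraphOrientation G) (x y : V) : Prop := D₁.arc x y ∧ D₂.arc y x

noncomputable def numDisagree (D₁ D₂ : GraphOrientation G) : ℕ :=
  {e : V × V | Disagree D₁ D₂ e.1 e.2}.ncard

lemma disagree_comm {x y : V} : Disagree D₁ D₂ x y ↔ Disagree D₂ D₁ y x := and_comm

lemma eq_of_forall_not_disagree (h : ∀ x y, ¬ Disagree D₁ D₂ x y) : D₁ = D₂ := by
  refine GraphOrientation.ext fun x y => ⟨fun hxy => ?_, fun hxy => ?_⟩
  · exact ((D₂.adj_iff x y).1 ((D₁.adj_iff x y).2 (Or.inl hxy))).resolve_right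
      fun hyx => h x y ⟨hxy, hyx⟩
  · exact ((D₁.adj_iff x y).1 ((D₂.adj_iff x y).2 (Or.inl hxy))).resolve_right
      fun hyx => h y x ⟨hyx, hxy⟩

lemma indeg_eq_ncard_add_ncard_disagree [Finite V] (D₁ D₂ : GraphOrientation G) (w : V) :
    indeg D₁ w = {x | D₁.arc x w ∧ D₂.arc x w}.ncard + {x | Disagree D₁ D₂ x w}.ncard := by
  have hsplit : {x | D₁.arc x w} = {x | D₁.arc x w ∧ D₂.arc x w} ∪ {x | Disagree D₁ D₂ x w} := by
    ext x
    simp only [Disagree, Set.mem_ofPred_eq, Set.mem_union, ← and_or_left, iff_self_and]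
    exact fun hxw => (D₂.adj_iff x w).1 ((D₁.adj_iff x w).2 (Or.inl hxw))
  rw [indeg, hsplit,
    Set.ncard_union_eq (Set.disjoint_left.2 fun x hx hx' => D₂.asymm x w hx.2 hx'.2)]

lemma indeg_add_ncard_disagree [Finite V] (D₁ D₂ : GraphOrientation G) (w : V) :
    indeg D₁ w + {x | Disagree D₁ D₂ w x}.ncard = indeg D₂ w + {x | Disagree D₁ D₂ x w}.ncard := by
  rw [indeg_eq_ncard_add_ncard_disagree D₁ D₂, indeg_eq_ncard_add_ncard_disagree D₂ D₁]
  simp only [disagree_comm (D₁ := D₂), and_comm (a := D₂.arc _ w)]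
  omega

lemma indeg_lt_of_forall_not_disagree [Finite V] {u b : V} (hin : ∀ x, ¬ Disagree D₁ D₂ x u)
    (hub : Disagree D₁ D₂ u b) : indeg D₁ u < indeg D₂ u := by
  have h := indeg_add_ncard_disagree D₁ D₂ u
  have hpos : 0 < {x | Disagree D₁ D₂ u x}.ncard := (Set.ncard_pos).2 ⟨b, hub⟩
  have hempty : {x | Disagree D₁ D₂ x u} = ∅ := Set.eq_empty_of_forall_notMem hin
  rw [hempty, Set.ncard_empty] at h
  omega

lemma numDisagree_reverse_lt [Finite V] {A : List (V × V)}
    (hA : ∀ e ∈ A, Disagree D₁ D₂ e.1 e.2) (hne : A ≠ []) :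
    numDisagree (D₁.reverse A fun e he => (hA e he).1) D₂ < numDisagree D₁ D₂ := by
  have hset : {e : V × V | Disagree (D₁.reverse A fun e he => (hA e he).1) D₂ e.1 e.2} =
      {e | Disagree D₁ D₂ e.1 e.2} \ {e | e ∈ A} := by
    ext ⟨x, y⟩
    simp only [Disagree, GraphOrientation.reverse, Set.mem_ofPred_eq, Set.mem_sdiff]
    constructor
    · rintro ⟨⟨hxy, hA'⟩ | hyx, h₂⟩
      exacts [⟨⟨hxy, h₂⟩, hA'⟩, absurd h₂ (D₂.asymm x y (hA _ hyx).2)]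
    · rintro ⟨⟨hxy, h₂⟩, hA'⟩
      exact ⟨Or.inl ⟨hxy, hA'⟩, h₂⟩
  obtain ⟨e, he⟩ := List.exists_mem_of_ne_nil A hne
  rw [numDisagree, numDisagree, hset]
  exact Set.ncard_lt_ncard (Set.sdiff_ssubset_left_iff.2 ⟨e, hA e he, he⟩)

end Disagreement

section Steps

variable {V : Type*} [Fintype V] {G : SimpleGraph V} {D₁ D₂ : GraphOrientation G}

lemma exists_cycleReversal_of_hasDicycle (h : HasDicycle (Disagree D₁ D₂)) :
    ∃ D₃, CycleReversal D₁ D₃ ∧ degSeq D₃ = degSeq D₁ ∧ numDisagree D₃ D₂ < numDisagree D₁ D₂ := by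
  obtain ⟨c, x, y, hc, hyx⟩ := h
  have hA := hc.rel_of_mem_cycleArcs hyx
  have hne : cycleArcs c ≠ [] := fun h => hc.ne_nil (by simpa [h] using (map_fst_cycleArcs c).symm)
  exact ⟨_, ⟨c, hc.ne_nil, hc.2.2.1, D₁.reversalAlong_reverse _ _⟩,
    degSeq_eq_of_indeg_eq_comp (Equiv.refl V) (D₁.indeg_reverse_cycleArcs hc.2.2.1 _),
    numDisagree_reverse_lt hA hne⟩

lemma exists_weakReversal_of_maximal_path (h₁ : NoReversiblePath D₁) (h₂ : NoReversiblePath D₂)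
    {p : List V} {u v : V} (hp : IsDipath (Disagree D₁ D₂) p u v) (huv : u ≠ v)
    (hin : ∀ x, ¬ Disagree D₁ D₂ x u) (hout : ∀ y, ¬ Disagree D₁ D₂ v y) :
    ∃ D₃, WeakReversal D₁ D₃ ∧ degSeq D₃ = degSeq D₁ ∧ numDisagree D₃ D₂ < numDisagree D₁ D₂ := by
  classical
  have hA := rel_of_mem_pathArcs hp.2.2.2
  have hp₁ : IsDipath D₁.arc p u v := hp.mono fun _ _ h => h.1
  obtain ⟨b, hb⟩ := hp.exists_mem_pathArcs_head huv
  obtain ⟨a, ha⟩ := hp.exists_mem_pathArcs_last huv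
  have hu : indeg D₁ u < indeg D₂ u := indeg_lt_of_forall_not_disagree hin (hA _ hb)
  have hv : indeg D₂ v < indeg D₁ v := indeg_lt_of_forall_not_disagree
    (fun x hx => hout x (disagree_comm.2 hx)) (disagree_comm.1 (hA _ ha))
  have huv₁ := h₁ u v hp₁.reflTransGen
  have hvu₂ := h₂ v u (hp.reverse.mono fun _ _ h => h.2).reflTransGen
  -- δ₁ v ≤ δ₁ u + 1 ≤ δ₂ u ≤ δ₂ v + 1 ≤ δ₁ v
  have heq : indeg D₁ u + 1 = indeg D₁ v := by omega
  have hdeg := D₁.indeg_reverse_pathArcs hp₁ fun e he => (hA e he).1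
  refine ⟨_, ⟨p, u, v, hp₁, heq, D₁.reversalAlong_reverse _ _⟩,
    degSeq_eq_of_indeg_eq_comp (Equiv.swap u v) fun w => ?_, numDisagree_reverse_lt hA
      (List.ne_nil_of_mem hb)⟩
  have h := hdeg w
  rcases eq_or_ne w u with rfl | hwu
  · simp only [huv, if_true, if_false] at h
    rw [Equiv.swap_apply_left]
    omega
  rcases eq_or_ne w v with rfl | hwv
  · simp only [hwu, if_true, if_false] at h
    rw [Equiv.swap_apply_right]
    omega
  simpa [hwu, hwv, Equiv.swap_apply_of_ne_of_ne hwu hwv] using h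

lemma exists_reversal_step (h₁ : NoReversiblePath D₁) (h₂ : NoReversiblePath D₂) (hne : D₁ ≠ D₂) :
    ∃ D₃, (WeakReversal D₁ D₃ ∨ CycleReversal D₁ D₃) ∧ degSeq D₃ = degSeq D₁ ∧
      numDisagree D₃ D₂ < numDisagree D₁ D₂ := by
  obtain ⟨a, b, hab⟩ : ∃ a b, Disagree D₁ D₂ a b := by
    by_contra! h
    exact hne (eq_of_forall_not_disagree h)
  have hab' : a ≠ b := by rintro rfl; exact D₁.asymm a a hab.1 hab.1
  rcases hasDicycle_or_exists_maximal_path hab hab' with hcyc | ⟨p, u, v, hp, huv, hin, hout⟩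
  · obtain ⟨D₃, hstep, hdeg, hlt⟩ := exists_cycleReversal_of_hasDicycle hcyc
    exact ⟨D₃, Or.inr hstep, hdeg, hlt⟩
  · obtain ⟨D₃, hstep, hdeg, hlt⟩ := exists_weakReversal_of_maximal_path h₁ h₂ hp huv hin hout
    exact ⟨D₃, Or.inl hstep, hdeg, hlt⟩

end Steps

/-- An orientation minimizing the lexicographic order of the indegree sequence can be
transformed into any orientation having no reversible path by a finite sequence of
weak reversals and cycle reversals. -/
theorem stmt_1 {V : Type*} [Fintype V] (G : SimpleGraph V)
    (Dlex D : GraphOrientation G)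
    (hlex : ∀ D' : GraphOrientation G, lexLE (degSeq Dlex) (degSeq D'))
    (hD : NoReversiblePath D) :
    Relation.ReflTransGen
      (fun X Y : GraphOrientation G => WeakReversal X Y ∨ CycleReversal X Y) Dlex D := by
  induction hn : numDisagree Dlex D using Nat.strong_induction_on generalizing Dlex with
  | _ n ih =>
  by_cases hne : Dlex = D
  · exact hne ▸ .refl
  obtain ⟨D₃, hstep, hdeg, hlt⟩ := exists_reversal_step (noReversiblePath_of_lexMin hlex) hD hne
  exact .head hstep (ih _ (hn ▸ hlt) D₃ (hdeg ▸ hlex) rfl)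
end

section
/- Let G be a finite undirected graph and let D be an orientation of G containing no reversible path. Then D minimizes the lexicographic order of the indegrees: for every orientation D' of G, the decreasingly sorted indegree sequence of D is lexicographically at most the decreasingly sorted indegree sequence of D'. -/
/-!
For every threshold `k`, the truncated sum `∑ v, (δ_D(v) - k)` is minimal among all orientations.
Let `R` be the set of vertices from which some vertex of indegree `> k` is reachable. `R` is
closed under taking in-neighbours, so the indegrees of `D` on `R` count exactly the edges of
`G[R]`, which every orientation must also count; and since `D` has no reversible path, every
vertex of `R` has indegree at least `k`, while every vertex outside `R` has indegree at most `k`.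
A decreasingly sorted sequence none of whose truncated sums exceeds those of another sequence of
the same length is lexicographically at most that sequence: compare first entries `a > b` at
threshold `b`.
-/

open Finset

theorem Finset.sum_tsub_le_sum_tsub {ι : Type*} [Fintype ι] (S : Finset ι) (f g : ι → ℕ)
    (k : ℕ) (hf_ge : ∀ i ∈ S, k ≤ f i) (hf_le : ∀ i ∉ S, f i ≤ k)
    (h : ∑ i ∈ S, f i ≤ ∑ i ∈ S, g i) :
    ∑ i, (f i - k) ≤ ∑ i, (g i - k) := by
  have hf_out : ∑ i, (f i - k) = ∑ i ∈ S, (f i - k) :=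
    (sum_subset (subset_univ S) fun i _ hi => by simp [hf_le i hi]).symm
  have hf_in : ∑ i ∈ S, f i = ∑ i ∈ S, (f i - k) + ∑ i ∈ S, k := by
    rw [← sum_add_distrib]
    exact sum_congr rfl fun i hi => (tsub_add_cancel_of_le (hf_ge i hi)).symm
  have hg_in : ∑ i ∈ S, g i ≤ ∑ i ∈ S, (g i - k) + ∑ i ∈ S, k := by
    rw [← sum_add_distrib]
    exact sum_le_sum fun i _ => le_tsub_add
  have hg_out : ∑ i ∈ S, (g i - k) ≤ ∑ i, (g i - k) := sum_le_sum_of_subset (subset_univ S)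
  omega

theorem lexLE_of_sum_tsub_le : ∀ l₁ l₂ : List ℕ, l₁.length = l₂.length →
    l₂.Pairwise (· ≥ ·) →
    (∀ k, (l₁.map (· - k)).sum ≤ (l₂.map (· - k)).sum) → lexLE l₁ l₂
  | [], [], _, _, _ => Or.inl rfl
  | a :: t₁, b :: t₂, hlen, hsorted, hsum => by
    rcases lt_trichotomy a b with hab | rfl | hab
    · exact Or.inr (List.Lex.rel hab)
    · have htail : ∀ k, (t₁.map (· - k)).sum ≤ (t₂.map (· - k)).sum := fun k => by
        have := hsum k
        simp only [List.map_cons, List.sum_cons] at this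
        omega
      rcases lexLE_of_sum_tsub_le t₁ t₂ (by simpa using hlen) hsorted.tail htail with heq | hlex
      · exact Or.inl (heq ▸ rfl)
      · exact Or.inr (List.Lex.cons hlex)
    · have hb_max : ((b :: t₂).map (· - b)).sum = 0 :=
        List.sum_eq_zero fun x hx => by
          simp only [List.map_cons, List.mem_cons, List.mem_map] at hx
          rcases hx with rfl | ⟨y, hy, rfl⟩
          · exact tsub_self b
          · exact tsub_eq_zero_of_le ((List.pairwise_cons.mp hsorted).1 y hy)
      have := hsum b
      rw [hb_max, List.map_cons, List.sum_cons] at this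
      omega

namespace GraphOrientation

open scoped Classical

variable {V : Type*} {G : SimpleGraph V}

noncomputable def arcsWithin (D : GraphOrientation G) (S : Finset V) : Finset (V × V) :=
  (S ×ˢ S).filter fun p => D.arc p.1 p.2

theorem two_mul_card_arcsWithin (D : GraphOrientation G) (S : Finset V) :
    2 * #(D.arcsWithin S) = #((S ×ˢ S).filter fun p => G.Adj p.1 p.2) := by
  have hdisj : Disjoint (D.arcsWithin S) ((S ×ˢ S).filter fun p => D.arc p.2 p.1) :=
    disjoint_filter.mpr fun p _ h => D.asymm _ _ h
  have hunion : (S ×ˢ S).filter (fun p => G.Adj p.1 p.2)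
      = D.arcsWithin S ∪ (S ×ˢ S).filter fun p => D.arc p.2 p.1 := by
    rw [arcsWithin, ← filter_or]
    exact filter_congr fun p _ => D.adj_iff p.1 p.2
  have hswap : #((S ×ˢ S).filter fun p => D.arc p.2 p.1) = #(D.arcsWithin S) := by
    refine card_nbij' Prod.swap Prod.swap ?_ ?_ (fun p _ => p.swap_swap) (fun p _ => p.swap_swap)
    all_goals
      intro p hp
      simp only [arcsWithin, coe_filter, mem_product] at hp ⊢
      exact ⟨hp.1.symm, hp.2⟩
  rw [hunion, card_union_of_disjoint hdisj, hswap, two_mul]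

theorem card_arcsWithin_eq (D D' : GraphOrientation G) (S : Finset V) :
    #(D.arcsWithin S) = #(D'.arcsWithin S) := by
  have h := two_mul_card_arcsWithin D S
  have h' := two_mul_card_arcsWithin D' S
  omega

variable [Fintype V]

theorem indeg_eq_card_filter (D : GraphOrientation G) (v : V) :
    indeg D v = #(univ.filter fun u => D.arc u v) := by
  rw [indeg, ← Set.ncard_coe_finset, coe_filter_univ]

theorem sum_indeg_eq_card (D : GraphOrientation G) (S : Finset V) :
    ∑ v ∈ S, indeg D v = #((univ ×ˢ S).filter fun p => D.arc p.1 p.2) := by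
  rw [card_filter, sum_product_right]
  simp only [indeg_eq_card_filter, card_filter]

theorem sum_indeg_le_of_forall_arc_mem (D D' : GraphOrientation G) {S : Finset V}
    (hS : ∀ u v, D.arc u v → v ∈ S → u ∈ S) :
    ∑ v ∈ S, indeg D v ≤ ∑ v ∈ S, indeg D' v := by
  have hD : ∑ v ∈ S, indeg D v = #(D.arcsWithin S) := by
    rw [sum_indeg_eq_card, arcsWithin]
    congr 1
    ext ⟨u, v⟩
    simp only [mem_filter, mem_product, mem_univ, true_and]
    exact ⟨fun h => ⟨⟨hS u v h.2 h.1, h.1⟩, h.2⟩, fun h => ⟨h.1.2, h.2⟩⟩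
  have hD' : #(D'.arcsWithin S) ≤ ∑ v ∈ S, indeg D' v := by
    rw [sum_indeg_eq_card, arcsWithin]
    exact card_le_card (filter_subset_filter _ (product_subset_product (subset_univ S) subset_rfl))
  calc ∑ v ∈ S, indeg D v = #(D.arcsWithin S) := hD
    _ = #(D'.arcsWithin S) := card_arcsWithin_eq D D' S
    _ ≤ ∑ v ∈ S, indeg D' v := hD'

theorem sum_indeg_tsub_le (D D' : GraphOrientation G) (hD : NoReversiblePath D) (k : ℕ) :
    ∑ v, (indeg D v - k) ≤ ∑ v, (indeg D' v - k) := by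
  set R : Finset V :=
    univ.filter fun u => ∃ v, Relation.ReflTransGen D.arc u v ∧ k < indeg D v
  refine sum_tsub_le_sum_tsub R _ _ k ?_ ?_ (sum_indeg_le_of_forall_arc_mem D D' ?_)
  · intro u hu
    obtain ⟨v, hreach, hv⟩ := (mem_filter.mp hu).2
    have := hD u v hreach
    omega
  · intro u hu
    by_contra! hk
    exact hu (mem_filter.mpr ⟨mem_univ u, u, .refl, hk⟩)
  · intro u v huv hv
    obtain ⟨w, hreach, hw⟩ := (mem_filter.mp hv).2
    exact mem_filter.mpr ⟨mem_univ u, w, .head huv hreach, hw⟩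

theorem degSeq_length (D : GraphOrientation G) : (degSeq D).length = Fintype.card V := by
  rw [degSeq, List.length_reverse, Multiset.length_sort, Multiset.card_map]
  rfl

theorem degSeq_pairwise_ge (D : GraphOrientation G) : (degSeq D).Pairwise (· ≥ ·) := by
  rw [degSeq, List.pairwise_reverse]
  exact Multiset.pairwise_sort _ (· ≤ ·)

theorem sum_map_tsub_degSeq (D : GraphOrientation G) (k : ℕ) :
    ((degSeq D).map (· - k)).sum = ∑ v, (indeg D v - k) := by
  rw [degSeq, List.map_reverse, List.sum_reverse, ← Multiset.sum_coe, ← Multiset.map_coe,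
    Multiset.sort_eq, Multiset.map_map]
  rfl

end GraphOrientation

/-- An orientation with no reversible path minimizes the lexicographic order of the
decreasingly sorted indegree sequence among all orientations. -/
theorem stmt_2 {V : Type*} [Fintype V] (G : SimpleGraph V)
    (D : GraphOrientation G) (hD : NoReversiblePath D) :
    ∀ D' : GraphOrientation G, lexLE (degSeq D) (degSeq D') := by
  intro D'
  refine lexLE_of_sum_tsub_le _ _ ?_ D'.degSeq_pairwise_ge fun k => ?_
  · rw [D.degSeq_length, D'.degSeq_length]
  · rw [D.sum_map_tsub_degSeq, D'.sum_map_tsub_degSeq]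
    exact D.sum_indeg_tsub_le D' hD k
end

section
/- Let D be an orientation of a finite undirected graph G and let ℓ be a nonnegative integer. Suppose P is a reversible directed path in D from u to v with δ_D(v) = ℓ and that no reversible path in D ends at a vertex of indegree greater than ℓ. Let Q be the set of vertices of indegree greater than ℓ in D and let Q' be the set of vertices that have a directed path in D to some vertex of Q. Then u ∉ Q' and v ∉ Q', and in the orientation D' obtained from D by reversing P, the set of vertices of indegree greater than ℓ is still Q and the set of vertices with a directed path to a vertex of Q is still Q'. -/
open Relation

theorem List.Nodup.eq_of_getElem?_eq_some {V : Type*} {p : List V} (hp : p.Nodup) {i j : ℕ}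
    {w : V} (hi : p[i]? = some w) (hj : p[j]? = some w) : i = j := by
  obtain ⟨hi, rfl⟩ := List.getElem?_eq_some_iff.mp hi
  obtain ⟨hj, hij⟩ := List.getElem?_eq_some_iff.mp hj
  exact (hp.getElem_inj_iff.mp hij).symm

section PathArcs

variable {V : Type*} {p : List V} {a b v w : V}

theorem mem_pathArcs_iff : (a, b) ∈ pathArcs p ↔ ∃ i, p[i]? = some a ∧ p[i + 1]? = some b := by
  simp only [pathArcs, List.mem_iff_getElem?, List.getElem?_zip_eq_some, List.getElem?_tail]

theorem mem_of_mem_pathArcs_left (h : (a, b) ∈ pathArcs p) : a ∈ p :=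
  (List.of_mem_zip h).1

theorem mem_of_mem_pathArcs_right (h : (a, b) ∈ pathArcs p) : b ∈ p :=
  List.mem_of_mem_tail (List.of_mem_zip h).2

theorem pathArcs_pred_subsingleton (hp : p.Nodup) (w : V) :
    {x | (x, w) ∈ pathArcs p}.Subsingleton := by
  intro x hx y hy
  obtain ⟨i, hxi, hwi⟩ := mem_pathArcs_iff.mp hx
  obtain ⟨j, hyj, hwj⟩ := mem_pathArcs_iff.mp hy
  obtain rfl : i = j := by simpa using hp.eq_of_getElem?_eq_some hwi hwj
  simpa [hxi] using hyj

theorem pathArcs_succ_subsingleton (hp : p.Nodup) (w : V) :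
    {x | (w, x) ∈ pathArcs p}.Subsingleton := by
  intro x hx y hy
  obtain ⟨i, hwi, hxi⟩ := mem_pathArcs_iff.mp hx
  obtain ⟨j, hwj, hyj⟩ := mem_pathArcs_iff.mp hy
  obtain rfl := hp.eq_of_getElem?_eq_some hwi hwj
  simpa [hxi] using hyj

theorem notMem_pathArcs_of_getLast?_eq (hp : p.Nodup) (hv : p.getLast? = some v) (x : V) :
    (v, x) ∉ pathArcs p := by
  intro h
  obtain ⟨i, hvi, hxi⟩ := mem_pathArcs_iff.mp h
  rw [List.getLast?_eq_getElem?] at hv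
  obtain rfl := hp.eq_of_getElem?_eq_some hvi hv
  have : p.length - 1 + 1 < p.length := (List.getElem?_eq_some_iff.mp hxi).1
  omega

theorem exists_mem_pathArcs_of_head?_ne (hw : w ∈ p) (hu : p.head? ≠ some w) :
    ∃ x, (x, w) ∈ pathArcs p := by
  obtain ⟨i, hi⟩ := List.mem_iff_getElem?.mp hw
  have hlt : i < p.length := (List.getElem?_eq_some_iff.mp hi).1
  obtain ⟨j, rfl⟩ : ∃ j, i = j + 1 := by
    refine Nat.exists_eq_add_one.mpr (Nat.pos_of_ne_zero ?_)
    rintro rfl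
    exact hu (List.head?_eq_getElem? ▸ hi)
  exact ⟨p[j], mem_pathArcs_iff.mpr ⟨j, List.getElem?_eq_getElem (by omega), hi⟩⟩

theorem exists_mem_pathArcs_of_getLast?_ne (hw : w ∈ p) (hv : p.getLast? ≠ some w) :
    ∃ x, (w, x) ∈ pathArcs p := by
  obtain ⟨i, hi⟩ := List.mem_iff_getElem?.mp hw
  have hlt : i < p.length := (List.getElem?_eq_some_iff.mp hi).1
  have hsucc : i + 1 < p.length := by
    by_contra hge
    obtain rfl : i = p.length - 1 := by omega
    exact hv (List.getLast?_eq_getElem? ▸ hi)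
  exact ⟨p[i + 1], mem_pathArcs_iff.mpr ⟨i, hi, List.getElem?_eq_getElem hsucc⟩⟩

/-- An inner vertex of a path has one arc in and one arc out; other vertices have none. -/
theorem ncard_pathArcs_pred_eq_succ (hp : p.Nodup) (hu : p.head? ≠ some w)
    (hv : p.getLast? ≠ some w) :
    {x | (x, w) ∈ pathArcs p}.ncard = {x | (w, x) ∈ pathArcs p}.ncard := by
  by_cases hw : w ∈ p
  · obtain ⟨x, hx⟩ := exists_mem_pathArcs_of_head?_ne hw hu
    obtain ⟨y, hy⟩ := exists_mem_pathArcs_of_getLast?_ne hw hv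
    rw [(pathArcs_pred_subsingleton hp w).eq_singleton_of_mem hx,
      (pathArcs_succ_subsingleton hp w).eq_singleton_of_mem hy, Set.ncard_singleton,
      Set.ncard_singleton]
  · have hpred : {x | (x, w) ∈ pathArcs p} = ∅ :=
      Set.eq_empty_of_forall_notMem fun _ h => hw (mem_of_mem_pathArcs_right h)
    have hsucc : {x | (w, x) ∈ pathArcs p} = ∅ :=
      Set.eq_empty_of_forall_notMem fun _ h => hw (mem_of_mem_pathArcs_left h)
    rw [hpred, hsucc]

end PathArcs

section Reachability

variable {V : Type*} {A : V → V → Prop} {p : List V} {u x y : V}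

theorem reflTransGen_of_mem_of_isChain (hc : p.IsChain A) (hu : p.head? = some u)
    (hx : x ∈ p) : ReflTransGen A u x :=
  hc.induction (ReflTransGen A u) p (fun _ _ hab h => h.tail hab)
    (fun hne => by rw [List.head?_eq_some_head hne] at hu; exact Option.some_inj.mp hu ▸ .refl)
    x hx

/-- A walk is shortened to a path by cutting out the closed walk at a repeated vertex. -/
theorem exists_isDipath_of_reflTransGen_s6 (h : ReflTransGen A x y) : ∃ p, IsDipath A p x y := by
  induction h using ReflTransGen.head_induction_on with
  | refl => exact ⟨[y], rfl, rfl, List.nodup_singleton y, List.isChain_singleton y⟩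
  | @head a b hab _ ih =>
    obtain ⟨q, hq_head, hq_last, hq_nodup, hq_chain⟩ := ih
    by_cases ha : a ∈ q
    · obtain ⟨s, t, rfl⟩ := List.append_of_mem ha
      refine ⟨a :: t, rfl, ?_, (List.sublist_append_right s _).nodup hq_nodup,
        hq_chain.suffix ⟨s, rfl⟩⟩
      rwa [List.getLast?_append_of_ne_nil _ (List.cons_ne_nil a t)] at hq_last
    · obtain ⟨q', rfl⟩ : ∃ q', q = b :: q' := by
        cases q with
        | nil => simp at hq_head
        | cons c q' =>
          obtain rfl : c = b := Option.some_inj.mp hq_head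
          exact ⟨q', rfl⟩
      exact ⟨a :: b :: q', rfl, by rwa [List.getLast?_cons_cons],
        List.nodup_cons.mpr ⟨ha, hq_nodup⟩, hq_chain.cons_cons hab⟩

end Reachability

namespace ReversalAlong

variable {V : Type*} {G : SimpleGraph V} {D D' : GraphOrientation G} {A : List (V × V)}

/-- Reversal removes the in-arcs of `w` lying in `A` and adds the out-arcs of `w` lying in `A`. -/
theorem indeg_add_ncard_pred [Finite V] (h : ReversalAlong D D' A) (w : V) :
    indeg D' w + {x | (x, w) ∈ A}.ncard = indeg D w + {x | (w, x) ∈ A}.ncard := by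
  set kept := {x | D.arc x w ∧ (x, w) ∉ A}
  have hD : {x | D.arc x w} = kept ∪ {x | (x, w) ∈ A} := by
    ext x
    by_cases hx : (x, w) ∈ A
    · simpa [kept, hx] using h.1 _ hx
    · simp [kept, hx]
  have hD' : {x | D'.arc x w} = kept ∪ {x | (w, x) ∈ A} := by
    ext x
    exact h.2 x w
  have hdisj : Disjoint kept {x | (w, x) ∈ A} :=
    Set.disjoint_left.mpr fun x hx hA => D.asymm w x (h.1 _ hA) hx.1
  have hdisj' : Disjoint kept {x | (x, w) ∈ A} :=
    Set.disjoint_left.mpr fun _ hx hA => hx.2 hA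
  unfold indeg
  rw [hD, hD', Set.ncard_union_eq hdisj, Set.ncard_union_eq hdisj']
  ring

theorem reflTransGen_iff (h : ReversalAlong D D' A) {w : V}
    (hA : ∀ a b, (a, b) ∈ A → ¬ ReflTransGen D.arc a w) (x : V) :
    ReflTransGen D'.arc x w ↔ ReflTransGen D.arc x w := by
  constructor
  · intro hx
    induction hx using ReflTransGen.head_induction_on with
    | refl => exact .refl
    | @head a b hab _ ih =>
      rcases (h.2 a b).mp hab with ⟨hab, -⟩ | hba
      · exact ih.head hab
      · exact absurd ih (hA b a hba)
  · intro hx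
    induction hx using ReflTransGen.head_induction_on with
    | refl => exact .refl
    | @head a b hab hbw ih =>
      by_cases hab' : (a, b) ∈ A
      · exact absurd (hbw.head hab) (hA a b hab')
      · exact ih.head ((h.2 a b).mpr (Or.inl ⟨hab, hab'⟩))

variable [Finite V] {p : List V} {v w : V}

theorem indeg_eq_of_pathArcs (h : ReversalAlong D D' (pathArcs p)) (hp : p.Nodup)
    (hu : p.head? ≠ some w) (hv : p.getLast? ≠ some w) : indeg D' w = indeg D w := by
  have := h.indeg_add_ncard_pred w
  rw [ncard_pathArcs_pred_eq_succ hp hu hv] at this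
  omega

theorem indeg_le_add_one_of_pathArcs (h : ReversalAlong D D' (pathArcs p)) (hp : p.Nodup)
    (w : V) : indeg D' w ≤ indeg D w + 1 := by
  have := h.indeg_add_ncard_pred w
  have hsucc : {x | (w, x) ∈ pathArcs p}.ncard ≤ 1 :=
    Set.ncard_le_one_iff_subsingleton.mpr (pathArcs_succ_subsingleton hp w)
  omega

theorem indeg_le_of_pathArcs_getLast (h : ReversalAlong D D' (pathArcs p)) (hp : p.Nodup)
    (hv : p.getLast? = some v) : indeg D' v ≤ indeg D v := by
  have := h.indeg_add_ncard_pred v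
  have hsucc : {x | (v, x) ∈ pathArcs p} = ∅ :=
    Set.eq_empty_of_forall_notMem (notMem_pathArcs_of_getLast?_eq hp hv)
  rw [hsucc, Set.ncard_empty] at this
  omega

end ReversalAlong

/-- If a reversible path ending at a vertex `v` of indegree `ℓ` is reversed, and no
reversible path ends at a vertex of indegree greater than `ℓ`, then the endpoints of
the path are not in `Q'`, and both `Q` (the vertices of indegree `> ℓ`) and `Q'`
(the vertices having a directed path to `Q`) are unchanged by the reversal. -/
theorem stmt_6 {V : Type*} [Fintype V] (G : SimpleGraph V)
    (D D' : GraphOrientation G) (ℓ : ℕ) (p : List V) (u v : V)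
    (hp : IsDipath D.arc p u v) (hrev : indeg D u + 1 < indeg D v)
    (hv : indeg D v = ℓ)
    (hmax : ∀ (q : List V) (a b : V),
      IsDipath D.arc q a b → indeg D a + 1 < indeg D b → indeg D b ≤ ℓ)
    (hD' : ReversalAlong D D' (pathArcs p)) :
    u ∉ {x | ∃ w, ℓ < indeg D w ∧ Relation.ReflTransGen D.arc x w} ∧
    v ∉ {x | ∃ w, ℓ < indeg D w ∧ Relation.ReflTransGen D.arc x w} ∧
    {w | ℓ < indeg D' w} = {w | ℓ < indeg D w} ∧
    {x | ∃ w, ℓ < indeg D w ∧ Relation.ReflTransGen D'.arc x w} =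
      {x | ∃ w, ℓ < indeg D w ∧ Relation.ReflTransGen D.arc x w} := by
  obtain ⟨hp_head, hp_last, hp_nodup, hp_chain⟩ := hp
  subst hv
  have reach_of_mem : ∀ x ∈ p, ReflTransGen D.arc u x :=
    fun _ hx => reflTransGen_of_mem_of_isChain hp_chain hp_head hx
  have hu : ¬ ∃ w, indeg D v < indeg D w ∧ ReflTransGen D.arc u w := by
    rintro ⟨w, hw, huw⟩
    obtain ⟨q, hq⟩ := exists_isDipath_of_reflTransGen_s6 huw
    have := hmax q u w hq (by omega)
    omega
  refine ⟨hu, fun ⟨w, hw, hvw⟩ =>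
    hu ⟨w, hw, (reach_of_mem v (List.mem_of_getLast? hp_last)).trans hvw⟩, ?_, ?_⟩
  · ext w
    simp only [Set.mem_ofPred_eq]
    by_cases hwu : w = u
    · have := hD'.indeg_le_add_one_of_pathArcs hp_nodup w
      subst hwu
      omega
    by_cases hwv : w = v
    · have := hD'.indeg_le_of_pathArcs_getLast hp_nodup hp_last
      subst hwv
      omega
    rw [hD'.indeg_eq_of_pathArcs hp_nodup (by simpa [hp_head] using Ne.symm hwu)
      (by simpa [hp_last] using Ne.symm hwv)]
  · ext x
    exact exists_congr fun w => and_congr_right fun hw => hD'.reflTransGen_iff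
      (fun a _ hab haw => hu ⟨w, hw, (reach_of_mem a (mem_of_mem_pathArcs_left hab)).trans haw⟩) x
end

section
/- Let D be a finite strongly connected digraph on n ≥ 2 vertices. Then there exist a cyclic ordering of the vertices (a bijection ν : V → Fin n) and an assignment to each arc a of a set S(a) ⊆ V which is either empty or a cyclic interval with respect to ν, such that: (i) for every vertex v, the sets S(a) over arcs a leaving v are pairwise disjoint and their union is V ∖ {v}; and (ii) for every pair of distinct vertices x and d, the walk that starts at x and from each current vertex w ≠ d follows the unique arc a leaving w with d ∈ S(a) reaches d after finitely many steps. In other words, every strongly connected digraph admits a feasible interval routing scheme in which each arc is labelled with at most one interval. -/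
/-!
Fix a root `r`, an in-branching `q` towards `r` and an out-branching `T` from `r` (both exist by
strong connectivity), and number the vertices in a depth-first preorder of `T` in which, at every
vertex `a ≠ r`, the child `q.next a` (if it is one) is visited last. Then every subtree of `T` is
an interval, and so is the subtree of `a` minus the subtree of its last child.

A packet for `d` standing at `a` descends `T` towards `d` when `d` lies in the subtree of `a`, and
otherwise moves to `q.next a`. The labels at `a` are the subtrees of the children, with the
complement of the subtree of `a` added to the label of `a → q.next a`; each is one cyclic interval
by the choice of the preorder. Climbing along `q` decreases its rank until the packet reaches a
vertex above `d`, in the worst case `r`, from which it descends to `d`.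
-/

open Relation Function

theorem Set.OrdConnected.exists_eq_Icc {α : Type*} [LinearOrder α] {s : Set α}
    (hs : s.OrdConnected) (hfin : s.Finite) (hne : s.Nonempty) :
    ∃ lo hi, lo ≤ hi ∧ s = Set.Icc lo hi := by
  obtain ⟨lo, hlo, hlo_le⟩ := s.exists_min_image id hfin hne
  obtain ⟨hi, hhi, hle_hi⟩ := s.exists_max_image id hfin hne
  exact ⟨lo, hi, hlo_le hi hhi, Set.Subset.antisymm (fun i hi => ⟨hlo_le i hi, hle_hi i hi⟩)
    (hs.out hlo hhi)⟩

namespace Fin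

variable {n : ℕ} [NeZero n]

theorem exists_eq_setOf_sub_lt_of_ordConnected {s : Set (Fin n)} (hs : s.OrdConnected) :
    ∃ (a : Fin n) (k : ℕ), s = {i | ((i - a : Fin n) : ℕ) < k} := by
  rcases s.eq_empty_or_nonempty with rfl | hne
  · exact ⟨0, 0, by simp⟩
  obtain ⟨lo, hi, hle, rfl⟩ := hs.exists_eq_Icc s.toFinite hne
  refine ⟨lo, hi - lo + 1, Set.ext fun i => ?_⟩
  rw [Set.mem_Icc, Set.mem_ofPred_eq, Fin.le_def, Fin.le_def]
  rw [Fin.le_def] at hle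
  rcases le_or_gt lo i with h | h
  · rw [Fin.coe_sub_iff_le.mpr h]; rw [Fin.le_def] at h; omega
  · rw [Fin.coe_sub_iff_lt.mpr h]; rw [Fin.lt_def] at h; have := hi.isLt; omega

theorem exists_compl_eq_setOf_sub_lt_of_ordConnected {s : Set (Fin n)} (hs : s.OrdConnected) :
    ∃ (a : Fin n) (k : ℕ), sᶜ = {i | ((i - a : Fin n) : ℕ) < k} := by
  rcases s.eq_empty_or_nonempty with rfl | hne
  · exact ⟨0, n, by ext i; simp⟩
  obtain ⟨lo, hi, hle, rfl⟩ := hs.exists_eq_Icc s.toFinite hne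
  rw [Fin.le_def] at hle
  rcases Nat.lt_or_ge (hi + 1) n with hlast | hlast
  · refine ⟨⟨hi + 1, hlast⟩, n - 1 - hi + lo, Set.ext fun i => ?_⟩
    rw [Set.mem_compl_iff, Set.mem_Icc, Set.mem_ofPred_eq, Fin.le_def, Fin.le_def]
    rcases le_or_gt (⟨hi + 1, hlast⟩ : Fin n) i with h | h
    · rw [Fin.coe_sub_iff_le.mpr h]; rw [Fin.le_def] at h; simp only at h ⊢; omega
    · rw [Fin.coe_sub_iff_lt.mpr h]; rw [Fin.lt_def] at h; simp only at h ⊢; omega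
  · refine ⟨0, lo, Set.ext fun i => ?_⟩
    rw [Set.mem_compl_iff, Set.mem_Icc, Set.mem_ofPred_eq, Fin.le_def, Fin.le_def, sub_zero]
    have := i.isLt
    omega

end Fin

theorem List.ordConnected_setOf_isPrefix {α : Type*} [LinearOrder α] (s : List α) :
    Set.OrdConnected {l : List α | s <+: l} := by
  refine ⟨fun l₁ h₁ l₃ h₃ l₂ hl₂ => ?_⟩
  induction s generalizing l₁ l₂ l₃ with
  | nil => exact List.nil_prefix
  | cons a s ih =>
    obtain ⟨h₁₂, h₂₃⟩ := hl₂
    obtain ⟨t₁, rfl, ht₁⟩ : ∃ t₁, l₁ = a :: t₁ ∧ s <+: t₁ := by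
      cases l₁ with
      | nil => simp at h₁
      | cons b t₁ => obtain ⟨rfl, h⟩ := List.cons_prefix_cons.1 h₁; exact ⟨t₁, rfl, h⟩
    obtain ⟨t₃, rfl, ht₃⟩ : ∃ t₃, l₃ = a :: t₃ ∧ s <+: t₃ := by
      cases l₃ with
      | nil => simp at h₃
      | cons b t₃ => obtain ⟨rfl, h⟩ := List.cons_prefix_cons.1 h₃; exact ⟨t₃, rfl, h⟩
    cases l₂ with
    | nil => exact absurd h₁₂ (not_le.2 List.Lex.nil)
    | cons b t₂ =>
      rw [← not_lt, List.cons_lt_cons_iff] at h₁₂ h₂₃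
      obtain rfl : b = a :=
        le_antisymm (not_lt.1 fun h => h₂₃ (.inl h)) (not_lt.1 fun h => h₁₂ (.inl h))
      have h₁₂' : t₁ ≤ t₂ := not_lt.1 fun h => h₁₂ (.inr ⟨rfl, h⟩)
      have h₂₃' : t₂ ≤ t₃ := not_lt.1 fun h => h₂₃ (.inr ⟨rfl, h⟩)
      exact List.cons_prefix_cons.2 ⟨rfl, ih t₁ ht₁ t₃ ht₃ t₂ ⟨h₁₂', h₂₃'⟩⟩

/-- A spanning in-branching of `R` rooted at `r`, with `rank` witnessing that iterating `next`
reaches `r`. -/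
structure InBranching {V : Type*} (R : V → V → Prop) (r : V) where
  next : V → V
  rank : V → ℕ
  rel_next : ∀ v, v ≠ r → R v (next v)
  rank_next_lt : ∀ v, v ≠ r → rank (next v) < rank v

namespace InBranching

variable {V : Type*} {R : V → V → Prop} {r : V}

theorem nonempty (h : ∀ v, ReflTransGen R v r) : Nonempty (InBranching R r) := by
  have hlen : ∀ v, ∃ k, ∃ l : List V, l.length = k ∧ List.IsChain R (v :: l) ∧
      (v :: l).getLast (List.cons_ne_nil _ _) = r := fun v => by
    obtain ⟨l, hl⟩ := List.exists_isChain_cons_of_relationReflTransGen (h v)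
    exact ⟨_, l, rfl, hl⟩
  classical
  have hstep : ∀ v, ∃ u, v ≠ r → R v u ∧ Nat.find (hlen u) < Nat.find (hlen v) := by
    intro v
    by_cases hv : v = r
    · exact ⟨v, fun h => absurd hv h⟩
    obtain ⟨l, hl, hchain, hlast⟩ := Nat.find_spec (hlen v)
    cases l with
    | nil => exact absurd hlast hv
    | cons u l =>
      refine ⟨u, fun _ => ⟨(List.isChain_cons_cons.1 hchain).1, ?_⟩⟩
      have := Nat.find_min' (hlen u)
        ⟨l, rfl, (List.isChain_cons_cons.1 hchain).2, by rwa [List.getLast_cons_cons] at hlast⟩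
      simp only [List.length_cons] at hl
      omega
  choose next hnext using hstep
  exact ⟨⟨next, fun v => Nat.find (hlen v), fun v hv => (hnext v hv).1,
    fun v hv => (hnext v hv).2⟩⟩

variable (T : InBranching R r)

theorem induction {P : V → Prop} (root : P r) (step : ∀ v, v ≠ r → P (T.next v) → P v) (v : V) :
    P v := by
  induction v using (measure T.rank).wf.induction with
  | h v ih =>
    by_cases hv : v = r
    · exact hv ▸ root
    · exact step v hv (ih _ (T.rank_next_lt v hv))

def IsChild (a b : V) : Prop := b ≠ r ∧ T.next b = a

theorem rel_of_isChild {a b : V} (h : T.IsChild a b) : R b a :=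
  h.2 ▸ T.rel_next b h.1

open scoped Classical in
/-- The keys of the tree arcs on the path from `r` to `v`. Ordered lexicographically, addresses
list the vertices in depth-first preorder, the children `b` of each `a` taken in increasing
order of `key a b`. -/
noncomputable def address (key : V → V → ℕ) (v : V) : List ℕ :=
  if v = r then [] else address key (T.next v) ++ [key (T.next v) v]
termination_by T.rank v
decreasing_by exact T.rank_next_lt v ‹_›

variable (key : V → V → ℕ)

@[simp] theorem address_root : T.address key r = [] := by
  rw [address, if_pos rfl]

theorem address_of_ne {v : V} (hv : v ≠ r) :
    T.address key v = T.address key (T.next v) ++ [key (T.next v) v] := by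
  rw [address, if_neg hv]

theorem address_of_isChild {a b : V} (h : T.IsChild a b) :
    T.address key b = T.address key a ++ [key a b] := by
  rw [T.address_of_ne key h.1, h.2]

variable {key}

theorem address_injective (hkey : ∀ a, Injective (key a)) : Injective (T.address key) := by
  intro v
  induction v using T.induction with
  | root =>
    intro w hw
    by_contra hne
    simp [T.address_of_ne key (Ne.symm hne)] at hw
  | step v hv ih =>
    intro w hw
    by_cases hw' : w = r
    · subst hw'; simp [T.address_of_ne key hv] at hw
    rw [T.address_of_ne key hv, T.address_of_ne key hw'] at hw
    obtain ⟨hnext, hkv⟩ := List.append_singleton_inj.1 hw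
    have hnext : T.next v = T.next w := ih hnext
    rw [hnext] at hkv
    exact hkey _ hkv

def subtree (key : V → V → ℕ) (a : V) : Set V := {v | T.address key a <+: T.address key v}

theorem mem_subtree {a v : V} : v ∈ T.subtree key a ↔ T.address key a <+: T.address key v :=
  Iff.rfl

theorem mem_subtree_self (a : V) : a ∈ T.subtree key a := List.prefix_refl _

@[simp] theorem subtree_root : T.subtree key r = Set.univ := by
  ext v; simp [mem_subtree]

theorem subtree_subset_of_isChild {a b : V} (h : T.IsChild a b) :
    T.subtree key b ⊆ T.subtree key a := fun _ hv =>
  (T.address_of_isChild key h ▸ List.prefix_append _ _).trans hv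

theorem not_mem_subtree_of_isChild {a b : V} (h : T.IsChild a b) : a ∉ T.subtree key b := by
  intro ha
  have := ha.length_le
  simp [T.address_of_isChild key h] at this

theorem disjoint_subtree_of_isChild (hkey : ∀ a, Injective (key a)) {a b₁ b₂ : V}
    (h₁ : T.IsChild a b₁) (h₂ : T.IsChild a b₂) (hne : b₁ ≠ b₂) :
    Disjoint (T.subtree key b₁) (T.subtree key b₂) := by
  refine Set.disjoint_left.2 fun v hv₁ hv₂ => hne (T.address_injective hkey ?_)
  refine (List.prefix_of_prefix_length_le hv₁ hv₂ ?_).eq_of_length ?_ <;>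
    simp [T.address_of_isChild key h₁, T.address_of_isChild key h₂]

theorem reflTransGen_isChild_of_mem_subtree (hkey : ∀ a, Injective (key a)) {a d : V}
    (h : d ∈ T.subtree key a) :
    ReflTransGen (fun x y => T.IsChild x y ∧ d ∈ T.subtree key y) a d := by
  induction d using T.induction generalizing a with
  | root =>
    obtain rfl : a = r := T.address_injective hkey (by simpa [mem_subtree] using h)
    exact .refl
  | step d hd ih =>
    by_cases had : a = d
    · exact had ▸ .refl
    have hnext : T.next d ∈ T.subtree key a := by
      rw [mem_subtree, T.address_of_ne key hd, List.prefix_concat_iff] at h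
      refine h.resolve_left fun h' => had (T.address_injective hkey ?_)
      rw [h', T.address_of_ne key hd]
    refine ReflTransGen.tail (ReflTransGen.mono (fun x y hxy => ⟨hxy.1, ?_⟩) _ _ (ih hnext))
      ⟨⟨hd, rfl⟩, T.mem_subtree_self d⟩
    exact hxy.2.trans (T.address_of_ne key hd ▸ List.prefix_append _ _)

theorem exists_isChild_of_mem_subtree (hkey : ∀ a, Injective (key a)) {a d : V}
    (h : d ∈ T.subtree key a) (hne : d ≠ a) : ∃ b, T.IsChild a b ∧ d ∈ T.subtree key b := by
  rcases (T.reflTransGen_isChild_of_mem_subtree hkey h).cases_head with rfl | ⟨b, hb, -⟩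
  · exact absurd rfl hne
  · exact ⟨b, hb⟩

theorem subtree_diff_eq_preimage (hkey : ∀ a, Injective (key a)) {a b : V} (hab : T.IsChild a b)
    (hmax : ∀ c, key a c ≤ key a b) :
    T.subtree key a \ T.subtree key b =
      T.address key ⁻¹' ({l | T.address key a <+: l} ∩ Set.Iio (T.address key b)) := by
  ext v
  refine ⟨fun ⟨hva, hvb⟩ => ⟨hva, ?_⟩, fun ⟨hva, hvb⟩ => ⟨hva, fun hb => ?_⟩⟩
  · rw [Set.mem_Iio, T.address_of_isChild key hab]
    by_cases hv : v = a
    · simpa [hv] using List.append_left_lt (l₁ := T.address key a) (List.nil_lt_cons _ [])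
    obtain ⟨c, hac, hvc⟩ := T.exists_isChild_of_mem_subtree hkey hva hv
    have hcb : c ≠ b := by rintro rfl; exact hvb hvc
    have hlt : key a c < key a b := (hmax c).lt_of_ne fun h => hcb (hkey a h)
    obtain ⟨t, ht⟩ := hvc
    rw [← ht, T.address_of_isChild key hac, List.append_assoc, List.singleton_append]
    exact List.append_left_lt (List.cons_lt_cons_iff.2 (.inl hlt))
  · exact List.IsPrefix.le hb hvb

end InBranching

section CyclicInterval

variable {V : Type*} {n : ℕ}

def IsCyclicInterval (ν : V ≃ Fin n) (t : Set V) : Prop :=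
  ∃ (a : Fin n) (k : ℕ), t = {w | ((ν w - a : Fin n) : ℕ) < k}

theorem exists_equiv_fin_le_iff [Fintype V] {α : Type*} [LinearOrder α] (f : V → α)
    (hf : Injective f) (hcard : Fintype.card V = n) :
    ∃ ν : V ≃ Fin n, ∀ v w, ν v ≤ ν w ↔ f v ≤ f w := by
  let := LinearOrder.lift' f hf
  exact ⟨(Fintype.orderIsoFinOfCardEq V hcard).symm.toEquiv,
    fun _ _ => (Fintype.orderIsoFinOfCardEq V hcard).symm.le_iff_le⟩

variable {α : Type*} [Preorder α] {ν : V ≃ Fin n} {f : V → α}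

theorem ordConnected_image_preimage (hν : ∀ v w, ν v ≤ ν w ↔ f v ≤ f w) {s : Set α}
    (hs : s.OrdConnected) : (ν '' (f ⁻¹' s)).OrdConnected := by
  refine ⟨?_⟩
  rintro _ ⟨v, hv, rfl⟩ _ ⟨x, hx, rfl⟩ i ⟨hvi, hix⟩
  refine ⟨ν.symm i, hs.out hv hx ⟨?_, ?_⟩, ν.apply_symm_apply i⟩ <;>
    rwa [← hν, ν.apply_symm_apply]

variable [NeZero n]

theorem isCyclicInterval_preimage (hν : ∀ v w, ν v ≤ ν w ↔ f v ≤ f w) {s : Set α}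
    (hs : s.OrdConnected) : IsCyclicInterval ν (f ⁻¹' s) := by
  obtain ⟨a, k, h⟩ := Fin.exists_eq_setOf_sub_lt_of_ordConnected (ordConnected_image_preimage hν hs)
  exact ⟨a, k, Set.ext fun w => by rw [← ν.injective.mem_set_image, h]; rfl⟩

theorem isCyclicInterval_compl_preimage (hν : ∀ v w, ν v ≤ ν w ↔ f v ≤ f w) {s : Set α}
    (hs : s.OrdConnected) : IsCyclicInterval ν (f ⁻¹' s)ᶜ := by
  obtain ⟨a, k, h⟩ :=
    Fin.exists_compl_eq_setOf_sub_lt_of_ordConnected (ordConnected_image_preimage hν hs)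
  refine ⟨a, k, Set.ext fun w => ?_⟩
  rw [Set.mem_compl_iff, ← ν.injective.mem_set_image, ← Set.mem_compl_iff, h]
  rfl

end CyclicInterval

theorem Finite.exists_injective_forall_le {V : Type*} [Finite V] (c : V) :
    ∃ f : V → ℕ, Injective f ∧ ∀ b, f b ≤ f c := by
  classical
  obtain ⟨N, ⟨e⟩⟩ := Finite.exists_equiv_fin V
  refine ⟨fun b => if b = c then N else e b, fun b₁ b₂ h => ?_, fun b => ?_⟩
  · have h₁ := (e b₁).isLt
    have h₂ := (e b₂).isLt
    dsimp only at h
    split_ifs at h with hb₁ hb₂ hb₂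
    · exact hb₁.trans hb₂.symm
    · omega
    · omega
    · exact e.injective (Fin.ext h)
  · have := (e b).isLt
    dsimp only
    rw [if_pos rfl]
    split_ifs <;> omega

section Routing

variable {V : Type*} {A : V → V → Prop} {r : V} (q : InBranching A r)
  (T : InBranching (flip A) r) (key : V → V → ℕ)

def routingLabel (a b : V) : Set V :=
  {d | (T.IsChild a b ∧ d ∈ T.subtree key b) ∨ (a ≠ r ∧ b = q.next a ∧ d ∉ T.subtree key a)}

variable {q T key}

theorem mem_routingLabel {a b d : V} :
    d ∈ routingLabel q T key a b ↔
      (T.IsChild a b ∧ d ∈ T.subtree key b) ∨ (a ≠ r ∧ b = q.next a ∧ d ∉ T.subtree key a) :=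
  Iff.rfl

variable (q T)

theorem isCyclicInterval_routingLabel {n : ℕ} [NeZero n] (hkey : ∀ a, Injective (key a))
    (hmax : ∀ a c, key a c ≤ key a (q.next a)) {ν : V ≃ Fin n}
    (hν : ∀ v w, ν v ≤ ν w ↔ T.address key v ≤ T.address key w) (a b : V) :
    IsCyclicInterval ν (routingLabel q T key a b) := by
  have hconn := List.ordConnected_setOf_isPrefix (T.address key a)
  by_cases hc : T.IsChild a b <;> by_cases hu : a ≠ r ∧ b = q.next a
  · have hDb : T.subtree key b ⊆ T.subtree key a := T.subtree_subset_of_isChild hc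
    have : routingLabel q T key a b = (T.subtree key a \ T.subtree key b)ᶜ := by
      ext d
      have := @hDb d
      simp only [mem_routingLabel, Set.mem_compl_iff, Set.mem_sdiff]
      tauto
    rw [this, T.subtree_diff_eq_preimage hkey hc (hu.2 ▸ hmax a)]
    exact isCyclicInterval_compl_preimage hν (hconn.inter Set.ordConnected_Iio)
  · have : routingLabel q T key a b = T.subtree key b := by
      ext d; rw [mem_routingLabel]; tauto
    exact this ▸ isCyclicInterval_preimage hν (List.ordConnected_setOf_isPrefix _)
  · have : routingLabel q T key a b = (T.subtree key a)ᶜ := by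
      ext d; rw [mem_routingLabel, Set.mem_compl_iff]; tauto
    exact this ▸ isCyclicInterval_compl_preimage hν hconn
  · have : routingLabel q T key a b = ∅ := by
      ext d; rw [mem_routingLabel, Set.mem_empty_iff_false]; tauto
    exact this ▸ isCyclicInterval_preimage (f := T.address key) hν Set.ordConnected_empty

theorem pairwiseDisjoint_routingLabel (hkey : ∀ a, Injective (key a)) (a : V) (s : Set V) :
    s.PairwiseDisjoint (routingLabel q T key a) := by
  intro b₁ _ b₂ _ hne
  refine Set.disjoint_left.2 fun d hd₁ hd₂ => ?_
  rcases mem_routingLabel.1 hd₁ with ⟨hc₁, hd₁⟩ | ⟨-, hq₁, hd₁⟩ <;>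
    rcases mem_routingLabel.1 hd₂ with ⟨hc₂, hd₂⟩ | ⟨-, hq₂, hd₂⟩
  · exact Set.disjoint_left.1 (T.disjoint_subtree_of_isChild hkey hc₁ hc₂ hne) hd₁ hd₂
  · exact hd₂ (T.subtree_subset_of_isChild hc₁ hd₁)
  · exact hd₁ (T.subtree_subset_of_isChild hc₂ hd₂)
  · exact hne (hq₁.trans hq₂.symm)

theorem biUnion_routingLabel (hkey : ∀ a, Injective (key a)) (a : V) :
    ⋃ b ∈ {b | A a b}, routingLabel q T key a b = {a}ᶜ := by
  ext d
  simp only [Set.mem_iUnion, Set.mem_compl_iff, Set.mem_singleton_iff, exists_prop,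
    Set.mem_ofPred_eq]
  constructor
  · rintro ⟨b, -, hd⟩ rfl
    rcases mem_routingLabel.1 hd with ⟨hc, hd⟩ | ⟨-, -, hd⟩
    · exact T.not_mem_subtree_of_isChild hc hd
    · exact hd (T.mem_subtree_self d)
  · intro hda
    by_cases hd : d ∈ T.subtree key a
    · obtain ⟨b, hb, hdb⟩ := T.exists_isChild_of_mem_subtree hkey hd hda
      exact ⟨b, T.rel_of_isChild hb, Or.inl ⟨hb, hdb⟩⟩
    · have har : a ≠ r := by rintro rfl; exact hd (by simp)
      exact ⟨q.next a, q.rel_next a har, Or.inr ⟨har, rfl, hd⟩⟩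

theorem reflTransGen_routingLabel (hkey : ∀ a, Injective (key a)) (d x : V) :
    ReflTransGen (fun a b => A a b ∧ d ∈ routingLabel q T key a b) x d := by
  have descend : ∀ a, d ∈ T.subtree key a →
      ReflTransGen (fun a b => A a b ∧ d ∈ routingLabel q T key a b) a d := fun a h =>
    ReflTransGen.mono (fun _ _ hyz => ⟨T.rel_of_isChild hyz.1, Or.inl hyz⟩) _ _
      (T.reflTransGen_isChild_of_mem_subtree hkey h)
  induction x using q.induction with
  | root => exact descend r (by simp)
  | step x hx ih =>
    by_cases hd : d ∈ T.subtree key x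
    · exact descend x hd
    · exact .head ⟨q.rel_next x hx, Or.inr ⟨hx, rfl, hd⟩⟩ ih

end Routing

/-- Every finite strongly connected digraph on `n ≥ 2` vertices admits a feasible
interval routing scheme in which each arc is labelled with at most one cyclic interval:
there are a cyclic ordering `ν` of the vertices and interval labels `S` on the arcs
such that at every vertex the labels of the outgoing arcs partition the other vertices,
and greedy forwarding always reaches the destination. -/
theorem stmt_7 {V : Type*} [Fintype V] (n : ℕ) (hn : 2 ≤ n)
    (hcard : Fintype.card V = n)
    (A : V → V → Prop) (hsc : ∀ u v : V, Relation.ReflTransGen A u v) :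
    ∃ (ν : V ≃ Fin n) (S : V → V → Set V),
      (∀ u v : V, A u v →
        (S u v = ∅ ∨ ∃ (a : Fin n) (k : ℕ),
          S u v = {w | ((ν w - a : Fin n) : ℕ) < k})) ∧
      (∀ v : V, Set.PairwiseDisjoint {w | A v w} (S v)) ∧
      (∀ v : V, (⋃ w ∈ {w | A v w}, S v w) = {v}ᶜ) ∧
      (∀ x d : V, x ≠ d → ∃ p : List V, p.head? = some x ∧ p.getLast? = some d ∧
        p.Chain' (fun a b => A a b ∧ d ∈ S a b)) := by
  have : NeZero n := ⟨by omega⟩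
  obtain ⟨r⟩ : Nonempty V := Fintype.card_pos_iff.1 (by omega)
  obtain ⟨q⟩ := InBranching.nonempty fun v => hsc v r
  obtain ⟨T⟩ := InBranching.nonempty (R := flip A) fun v => (hsc r v).swap
  choose key hkey hmax using fun a => Finite.exists_injective_forall_le (q.next a)
  obtain ⟨ν, hν⟩ := exists_equiv_fin_le_iff (T.address key) (T.address_injective hkey) hcard
  refine ⟨ν, routingLabel q T key,
    fun u v _ => Or.inr (isCyclicInterval_routingLabel q T hkey hmax hν u v),
    fun v => pairwiseDisjoint_routingLabel q T hkey v _, biUnion_routingLabel q T hkey,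
    fun x d _ => ?_⟩
  obtain ⟨l, hl, hlast⟩ :=
    List.exists_isChain_cons_of_relationReflTransGen (reflTransGen_routingLabel q T hkey d x)
  exact ⟨x :: l, rfl, by rw [List.getLast?_eq_some_getLast (List.cons_ne_nil _ _), hlast], hl⟩
end
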